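/- arXiv:0710.3490 — 8 statements merged into one kernel-verified Lean document; each statement's English description precedes it below -/
import Mathlib

section
/- Let Λ₀, Λ₁, Λ₂, Λ₃ and M₀, M₁, M₂, M₃ be real numbers with Λ₀ > 0 and Λ₀ > Λᵢ for i = 1,2,3, and define V : ℝ⁴ → ℝ by V(r) = (1/2)(Λ₀ r₀² − Λ₁ r₁² − Λ₂ r₂² − Λ₃ r₃²) − (M₀ r₀ − M₁ r₁ − M₂ r₂ − M₃ r₃). Suppose V attains its global minimum over the forward lightcone LC⁺ at exactly two distinct points p and q. Then there exists an index k ∈ {1,2,3} such that M_k = 0, p_k = −q_k ≠ 0, and p_j = q_j for every coordinate index j ≠ k; in other words, the reflection of the k-th coordinate axis is a symmetry of V that preserves LC⁺ and exchanges the two minima. -/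
set_option maxHeartbeats 1600000

/-- The forward lightcone `LC⁺` in Minkowski space `ℝ⁴`. -/
def LCplus : Set (Fin 4 → ℝ) :=
  {r | 0 ≤ r 0 ∧ (r 1) ^ 2 + (r 2) ^ 2 + (r 3) ^ 2 ≤ (r 0) ^ 2}

/-- Farkas-type lemma in `ℝ⁴`: a linear functional which is nonnegative on the open
half-space `{v | ⟨w, v⟩ > 0}` (with `w ≠ 0`) is a nonnegative multiple of `⟨w, ·⟩`. -/
lemma farkas4 (p0 p1 p2 p3 G0 G1 G2 G3 : ℝ) (hp0 : 0 < p0)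
    (h : ∀ v0 v1 v2 v3 : ℝ, 0 < p0*v0 - p1*v1 - p2*v2 - p3*v3 →
      0 ≤ G0*v0 + G1*v1 + G2*v2 + G3*v3) :
    ∃ μ : ℝ, 0 ≤ μ ∧ G0 = μ*p0 ∧ G1 = -(μ*p1) ∧ G2 = -(μ*p2) ∧ G3 = -(μ*p3) := by
  set S : ℝ := p0^2 + p1^2 + p2^2 + p3^2 with hS
  have hSpos : 0 < S := by positivity
  set W : ℝ := G0*p0 - G1*p1 - G2*p2 - G3*p3 with hW
  have hW0 : 0 ≤ W := by
    have := h p0 (-p1) (-p2) (-p3) (by nlinarith)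
    nlinarith
  have hker : ∀ u0 u1 u2 u3 : ℝ, p0*u0 - p1*u1 - p2*u2 - p3*u3 = 0 →
      G0*u0 + G1*u1 + G2*u2 + G3*u3 = 0 := by
    intro u0 u1 u2 u3 hu
    set a : ℝ := G0*u0 + G1*u1 + G2*u2 + G3*u3 with ha
    have key : ∀ ε : ℝ, 0 < ε → -(ε*W) ≤ a ∧ a ≤ ε*W := by
      intro ε hε
      constructor
      · have := h (u0 + ε*p0) (u1 - ε*p1) (u2 - ε*p2) (u3 - ε*p3)
          (by nlinarith [mul_pos hε hSpos])
        nlinarith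
      · have := h (-u0 + ε*p0) (-u1 - ε*p1) (-u2 - ε*p2) (-u3 - ε*p3)
          (by nlinarith [mul_pos hε hSpos])
        nlinarith
    rcases lt_trichotomy a 0 with hlt | he | hgt
    · rcases lt_or_eq_of_le hW0 with hWpos | hWz
      · have hεpos : (0:ℝ) < -a/(2*W) := div_pos (by linarith) (by linarith)
        have hεW : (-a/(2*W))*W = -a/2 := by field_simp
        have := (key _ hεpos).1
        rw [hεW] at this; linarith
      · have := (key 1 one_pos).1
        nlinarith
    · exact he
    · rcases lt_or_eq_of_le hW0 with hWpos | hWz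
      · have hεpos : (0:ℝ) < a/(2*W) := div_pos (by linarith) (by linarith)
        have hεW : (a/(2*W))*W = a/2 := by field_simp
        have := (key _ hεpos).2
        rw [hεW] at this; linarith
      · have := (key 1 one_pos).2
        nlinarith
  have hSne : S ≠ 0 := ne_of_gt hSpos
  refine ⟨W/S, by positivity, ?_, ?_, ?_, ?_⟩
  · have h0 := hker (S - p0*p0) (p0*p1) (p0*p2) (p0*p3) (by rw [hS]; ring)
    field_simp
    linear_combination h0 - G0*hS
  · have h1 := hker (p1*p0) (S - p1*p1) (-(p1*p2)) (-(p1*p3)) (by rw [hS]; ring)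
    field_simp
    linear_combination h1 - G1*hS
  · have h2 := hker (p2*p0) (-(p2*p1)) (S - p2*p2) (-(p2*p3)) (by rw [hS]; ring)
    field_simp
    linear_combination h2 - G2*hS
  · have h3 := hker (p3*p0) (-(p3*p1)) (-(p3*p2)) (S - p3*p3) (by rw [hS]; ring)
    field_simp
    linear_combination h3 - G3*hS

/-- First-order optimality: at a global minimizer `p` of `V` over `LC⁺` with `p 0 > 0`,
the derivative of `V` is nonnegative along any direction `v` with `η(p, v) > 0`. -/
lemma grad_nonneg (Λ M : Fin 4 → ℝ) (V : (Fin 4 → ℝ) → ℝ)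
    (hV : ∀ r, V r = (1 / 2 : ℝ) *
        (Λ 0 * (r 0) ^ 2 - Λ 1 * (r 1) ^ 2 - Λ 2 * (r 2) ^ 2 - Λ 3 * (r 3) ^ 2)
      - (M 0 * r 0 - M 1 * r 1 - M 2 * r 2 - M 3 * r 3))
    (p : Fin 4 → ℝ) (hp : p ∈ LCplus) (hmin : ∀ s ∈ LCplus, V p ≤ V s)
    (hp0 : 0 < p 0) (v0 v1 v2 v3 : ℝ)
    (hψ : 0 < p 0 * v0 - p 1 * v1 - p 2 * v2 - p 3 * v3) :
    0 ≤ (Λ 0 * p 0 - M 0) * v0 + (M 1 - Λ 1 * p 1) * v1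
      + (M 2 - Λ 2 * p 2) * v2 + (M 3 - Λ 3 * p 3) * v3 := by
  obtain ⟨hp0', hpc⟩ := hp
  by_contra hA
  push_neg at hA
  obtain ⟨A, hAdef, hA⟩ : ∃ A : ℝ, A = (Λ 0 * p 0 - M 0) * v0 + (M 1 - Λ 1 * p 1) * v1
      + (M 2 - Λ 2 * p 2) * v2 + (M 3 - Λ 3 * p 3) * v3 ∧ A < 0 := ⟨_, rfl, hA⟩
  obtain ⟨ψ, hψdef, hψ⟩ : ∃ x : ℝ, x = p 0 * v0 - p 1 * v1 - p 2 * v2 - p 3 * v3 ∧ 0 < x :=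
    ⟨_, rfl, hψ⟩
  obtain ⟨E, hEdef⟩ : ∃ x : ℝ, x = v0^2 - v1^2 - v2^2 - v3^2 := ⟨_, rfl⟩
  obtain ⟨Qv, hQdef⟩ : ∃ x : ℝ, x = Λ 0 * v0^2 - Λ 1 * v1^2 - Λ 2 * v2^2 - Λ 3 * v3^2 := ⟨_, rfl⟩
  have habs0 : 0 < 1 + |v0| := by positivity
  have habsE : 0 < 1 + |E| := by positivity
  have habsQ : 0 < 1 + |Qv| := by positivity
  obtain ⟨t, ht, ht1, ht2, ht3⟩ :
      ∃ t : ℝ, 0 < t ∧ t * (1 + |v0|) ≤ p 0 ∧ t * (1 + |E|) ≤ ψ ∧ t * (1 + |Qv|) ≤ -A := by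
    refine ⟨min (min (p 0 / (1 + |v0|)) (ψ / (1 + |E|))) ((-A) / (1 + |Qv|)),
      lt_min (lt_min (div_pos hp0 habs0) (div_pos hψ habsE)) (div_pos (by linarith) habsQ),
      ?_, ?_, ?_⟩
    · rw [← le_div_iff₀ habs0]; exact (min_le_left _ _).trans (min_le_left _ _)
    · rw [← le_div_iff₀ habsE]; exact (min_le_left _ _).trans (min_le_right _ _)
    · rw [← le_div_iff₀ habsQ]; exact min_le_right _ _
  set r : Fin 4 → ℝ := fun j => p j + t * ![v0, v1, v2, v3] j with hrdef
  have hr0 : r 0 = p 0 + t * v0 := by simp [hrdef]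
  have hr1 : r 1 = p 1 + t * v1 := by simp [hrdef]
  have hr2 : r 2 = p 2 + t * v2 := by simp [hrdef]
  have hr3 : r 3 = p 3 + t * v3 := by simp [hrdef]
  have hrmem : r ∈ LCplus := by
    constructor
    · rw [hr0]
      nlinarith [abs_nonneg v0, neg_abs_le v0, mul_le_mul_of_nonneg_left (neg_abs_le v0) ht.le]
    · rw [hr0, hr1, hr2, hr3]
      have h1 : t * |E| ≤ ψ - t := by linarith [ht2]
      have h2 : t * (t * |E|) ≤ t * (ψ - t) := mul_le_mul_of_nonneg_left h1 ht.le
      have h3 : t ^ 2 * -|E| ≤ t ^ 2 * E :=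
        mul_le_mul_of_nonneg_left (neg_abs_le E) (sq_nonneg t)
      have key : 0 ≤ (p 0 ^ 2 - (p 1 ^ 2 + p 2 ^ 2 + p 3 ^ 2)) + 2 * (t * ψ) + t ^ 2 * E := by
        linarith [hpc, h2, h3, mul_pos ht hψ, sq_nonneg t]
      rw [hψdef, hEdef] at key
      nlinarith [key]
  have hVle := hmin r hrmem
  have hVr : V r = V p + t * A + t ^ 2 * Qv / 2 := by
    rw [hV r, hV p, hr0, hr1, hr2, hr3, hAdef, hQdef]
    ring
  rw [hVr] at hVle
  have h4 : t * |Qv| ≤ -A - t := by linarith [ht3]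
  have h5 : t * (t * |Qv|) ≤ t * (-A - t) := mul_le_mul_of_nonneg_left h4 ht.le
  have h6 : t ^ 2 * Qv ≤ t ^ 2 * |Qv| :=
    mul_le_mul_of_nonneg_left (le_abs_self Qv) (sq_nonneg t)
  have h7 : t * A < 0 := mul_neg_of_pos_of_neg ht hA
  nlinarith

/-- Flipping the sign of the `k`-th coordinate (`k ≠ 0`, `M k = 0`) preserves
membership in the lightcone and the value of the potential. -/
lemma flip_lemma (Λ M : Fin 4 → ℝ) (V : (Fin 4 → ℝ) → ℝ)
    (hV : ∀ r, V r = (1 / 2 : ℝ) *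
        (Λ 0 * (r 0) ^ 2 - Λ 1 * (r 1) ^ 2 - Λ 2 * (r 2) ^ 2 - Λ 3 * (r 3) ^ 2)
      - (M 0 * r 0 - M 1 * r 1 - M 2 * r 2 - M 3 * r 3))
    (k : Fin 4) (hk : k ≠ 0) (hMk : M k = 0) (x : Fin 4 → ℝ) (hxL : x ∈ LCplus) :
    (fun j => if j = k then -(x j) else x j) ∈ LCplus ∧
      V (fun j => if j = k then -(x j) else x j) = V x := by
  have h0 : ((0 : Fin 4) = k) = False := by
    simp only [eq_iff_iff, iff_false]; exact fun h => hk h.symm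
  have hsq : ∀ j : Fin 4, (if j = k then -(x j) else x j) ^ 2 = (x j) ^ 2 := by
    intro j; by_cases h : j = k <;> simp [h]
  have hlin : ∀ j : Fin 4, M j * (if j = k then -(x j) else x j) = M j * x j := by
    intro j; by_cases h : j = k
    · rw [if_pos h, h, hMk]; ring
    · rw [if_neg h]
  constructor
  · constructor
    · show (0:ℝ) ≤ if (0 : Fin 4) = k then -(x 0) else x 0
      rw [if_neg (by rw [h0]; exact id)]
      exact hxL.1
    · show (if (1 : Fin 4) = k then -(x 1) else x 1) ^ 2
          + (if (2 : Fin 4) = k then -(x 2) else x 2) ^ 2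
          + (if (3 : Fin 4) = k then -(x 3) else x 3) ^ 2
        ≤ (if (0 : Fin 4) = k then -(x 0) else x 0) ^ 2
      rw [hsq 0, hsq 1, hsq 2, hsq 3]
      exact hxL.2
  · rw [hV, hV]
    show (1 / 2 : ℝ) *
        (Λ 0 * (if (0:Fin 4) = k then -(x 0) else x 0) ^ 2
          - Λ 1 * (if (1:Fin 4) = k then -(x 1) else x 1) ^ 2
          - Λ 2 * (if (2:Fin 4) = k then -(x 2) else x 2) ^ 2
          - Λ 3 * (if (3:Fin 4) = k then -(x 3) else x 3) ^ 2)
      - (M 0 * (if (0:Fin 4) = k then -(x 0) else x 0)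
          - M 1 * (if (1:Fin 4) = k then -(x 1) else x 1)
          - M 2 * (if (2:Fin 4) = k then -(x 2) else x 2)
          - M 3 * (if (3:Fin 4) = k then -(x 3) else x 3)) = _
    rw [hsq 0, hsq 1, hsq 2, hsq 3, hlin 1, hlin 2, hlin 3,
      if_neg (show ¬((0:Fin 4) = k) by rw [h0]; exact id)]

/-- A degenerate global minimum must lie on the boundary of the lightcone. -/
lemma on_boundary (Λ M : Fin 4 → ℝ) (V : (Fin 4 → ℝ) → ℝ)
    (hV : ∀ r, V r = (1 / 2 : ℝ) *
        (Λ 0 * (r 0) ^ 2 - Λ 1 * (r 1) ^ 2 - Λ 2 * (r 2) ^ 2 - Λ 3 * (r 3) ^ 2)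
      - (M 0 * r 0 - M 1 * r 1 - M 2 * r 2 - M 3 * r 3))
    (p q : Fin 4 → ℝ) (hpL : p ∈ LCplus) (hpmin : ∀ s ∈ LCplus, V p ≤ V s)
    (hVpq : V p = V q)
    (hQd : Λ 0 * (p 0 - q 0)^2 - Λ 1 * (p 1 - q 1)^2 - Λ 2 * (p 2 - q 2)^2
            - Λ 3 * (p 3 - q 3)^2 < 0)
    (hds : (p 0 - q 0)^2 < (p 1 - q 1)^2 + (p 2 - q 2)^2 + (p 3 - q 3)^2) :
    p 1 ^ 2 + p 2 ^ 2 + p 3 ^ 2 = p 0 ^ 2 := by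
  by_contra hne
  have hlt : p 1 ^ 2 + p 2 ^ 2 + p 3 ^ 2 < p 0 ^ 2 := lt_of_le_of_ne hpL.2 hne
  have hp0 : 0 < p 0 := by
    rcases hpL.1.lt_or_eq with h | h
    · exact h
    · nlinarith [sq_nonneg (p 1), sq_nonneg (p 2), sq_nonneg (p 3)]
  obtain ⟨C, hC⟩ : ∃ x : ℝ, x = p 0 * ((p 0 - q 0)/2) - p 1 * ((p 1 - q 1)/2)
      - p 2 * ((p 2 - q 2)/2) - p 3 * ((p 3 - q 3)/2) := ⟨_, rfl⟩
  obtain ⟨D, hD⟩ : ∃ x : ℝ, x = ((p 0 - q 0)/2)^2 - ((p 1 - q 1)/2)^2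
      - ((p 2 - q 2)/2)^2 - ((p 3 - q 3)/2)^2 := ⟨_, rfl⟩
  obtain ⟨s, hs⟩ : ∃ x : ℝ, x = p 0 ^ 2 - (p 1 ^ 2 + p 2 ^ 2 + p 3 ^ 2) := ⟨_, rfl⟩
  obtain ⟨d0, hd0⟩ : ∃ x : ℝ, x = (p 0 - q 0)/2 := ⟨_, rfl⟩
  have hDneg : D < 0 := by rw [hD]; linarith
  have hspos : 0 < s := by rw [hs]; linarith
  have habs0 : 0 < 1 + |d0| := by positivity
  have habsC : 0 < 2 * |C| + |D| + 1 := by positivity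
  obtain ⟨ε, hε, hε1, hεa, hεb⟩ :
      ∃ ε : ℝ, 0 < ε ∧ ε ≤ 1 ∧ ε * (1 + |d0|) ≤ p 0 ∧ ε * (2 * |C| + |D| + 1) ≤ s := by
    refine ⟨min 1 (min (p 0 / (1 + |d0|)) (s / (2 * |C| + |D| + 1))),
      lt_min one_pos (lt_min (div_pos hp0 habs0) (div_pos hspos habsC)),
      min_le_left _ _, ?_, ?_⟩
    · rw [← le_div_iff₀ habs0]; exact (min_le_right _ _).trans (min_le_left _ _)
    · rw [← le_div_iff₀ habsC]; exact (min_le_right _ _).trans (min_le_right _ _)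
  set r : Fin 4 → ℝ := fun j => p j + ε * ((p j - q j)/2) with hrdef
  have hr0 : r 0 = p 0 + ε * ((p 0 - q 0)/2) := rfl
  have hr1 : r 1 = p 1 + ε * ((p 1 - q 1)/2) := rfl
  have hr2 : r 2 = p 2 + ε * ((p 2 - q 2)/2) := rfl
  have hr3 : r 3 = p 3 + ε * ((p 3 - q 3)/2) := rfl
  have hrmem : r ∈ LCplus := by
    constructor
    · rw [hr0, ← hd0]
      have k0 : ε * (-|d0|) ≤ ε * d0 := mul_le_mul_of_nonneg_left (neg_abs_le d0) hε.le
      linarith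
    · rw [hr0, hr1, hr2, hr3]
      have k2 : ε * (-|C|) ≤ ε * C := mul_le_mul_of_nonneg_left (neg_abs_le C) hε.le
      have hDabs : |D| = -D := abs_of_neg hDneg
      have hsq : ε ^ 2 ≤ ε := by nlinarith
      have k3 : ε ^ 2 * |D| ≤ ε * |D| := mul_le_mul_of_nonneg_right hsq (abs_nonneg D)
      have key : 0 ≤ s + 2 * (ε * C) + ε ^ 2 * D := by
        have : ε ^ 2 * D = -(ε ^ 2 * |D|) := by rw [hDabs]; ring
        linarith
      rw [hC, hD, hs] at key
      linarith [key]
  have hVle := hpmin r hrmem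
  have hVr : V r = V p + (ε + ε ^ 2 / 2) *
      ((Λ 0 * (p 0 - q 0)^2 - Λ 1 * (p 1 - q 1)^2 - Λ 2 * (p 2 - q 2)^2
        - Λ 3 * (p 3 - q 3)^2) / 4) + (ε / 2) * (V p - V q) := by
    rw [hV r, hV p, hV q, hr0, hr1, hr2, hr3]
    ring
  have hfac : (0:ℝ) < ε + ε ^ 2 / 2 := by positivity
  have hneg : (ε + ε ^ 2 / 2) *
      ((Λ 0 * (p 0 - q 0)^2 - Λ 1 * (p 1 - q 1)^2 - Λ 2 * (p 2 - q 2)^2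
        - Λ 3 * (p 3 - q 3)^2) / 4) < 0 :=
    mul_neg_of_pos_of_neg hfac (by linarith)
  rw [hVr] at hVle
  have hz : ε / 2 * (V p - V q) = 0 := by rw [hVpq]; ring
  linarith

/-- Proposition 4: a twice-degenerate global minimum of the 2HDM potential can occur
only via spontaneous violation of a discrete `Z₂` symmetry of the potential: some
spacelike axis `k` has `M k = 0`, and the two minima are exchanged by flipping the
`k`-th coordinate. -/
theorem stmt_2 (Λ M : Fin 4 → ℝ)
    (hΛ0 : 0 < Λ 0) (hΛ : ∀ i : Fin 4, i ≠ 0 → Λ i < Λ 0)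
    (V : (Fin 4 → ℝ) → ℝ)
    (hV : ∀ r, V r = (1 / 2 : ℝ) *
        (Λ 0 * (r 0) ^ 2 - Λ 1 * (r 1) ^ 2 - Λ 2 * (r 2) ^ 2 - Λ 3 * (r 3) ^ 2)
      - (M 0 * r 0 - M 1 * r 1 - M 2 * r 2 - M 3 * r 3))
    (p q : Fin 4 → ℝ) (hpq : p ≠ q)
    (hmin : {r | r ∈ LCplus ∧ ∀ s ∈ LCplus, V r ≤ V s} = {p, q}) :
    ∃ k : Fin 4, k ≠ 0 ∧ M k = 0 ∧ p k = -q k ∧ p k ≠ 0 ∧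
      ∀ j : Fin 4, j ≠ k → p j = q j := by
  have hΛ1 : Λ 1 < Λ 0 := hΛ 1 (by decide)
  have hΛ2 : Λ 2 < Λ 0 := hΛ 2 (by decide)
  have hΛ3 : Λ 3 < Λ 0 := hΛ 3 (by decide)
  -- extract minimality facts
  have hpP : p ∈ LCplus ∧ ∀ s ∈ LCplus, V p ≤ V s := by
    have h : p ∈ ({p, q} : Set (Fin 4 → ℝ)) := by simp
    rw [← hmin] at h; exact h
  have hqP : q ∈ LCplus ∧ ∀ s ∈ LCplus, V q ≤ V s := by
    have h : q ∈ ({p, q} : Set (Fin 4 → ℝ)) := by simp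
    rw [← hmin] at h; exact h
  obtain ⟨hpL, hpmin⟩ := hpP
  obtain ⟨hqL, hqmin⟩ := hqP
  have hVpq : V p = V q := le_antisymm (hpmin q hqL) (hqmin p hpL)
  have htwo : ∀ r, r ∈ LCplus → V r ≤ V p → r = p ∨ r = q := by
    intro r hr hVr
    have h : r ∈ ({p, q} : Set (Fin 4 → ℝ)) := by
      rw [← hmin]; exact ⟨hr, fun s hs => le_trans hVr (hpmin s hs)⟩
    simpa using h
  have coords : ∀ x y : Fin 4 → ℝ, x 0 = y 0 → x 1 = y 1 → x 2 = y 2 → x 3 = y 3 → x = y := by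
    intro x y h0 h1 h2 h3
    funext j
    fin_cases j <;> assumption
  -- the midpoint
  set m : Fin 4 → ℝ := fun j => (p j + q j) / 2 with hmdef
  have hm0 : m 0 = (p 0 + q 0) / 2 := rfl
  have hm1 : m 1 = (p 1 + q 1) / 2 := rfl
  have hm2 : m 2 = (p 2 + q 2) / 2 := rfl
  have hm3 : m 3 = (p 3 + q 3) / 2 := rfl
  have hmL : m ∈ LCplus := by
    constructor
    · rw [hm0]; linarith [hpL.1, hqL.1]
    · rw [hm0, hm1, hm2, hm3]
      nlinarith [hpL.1, hqL.1, hpL.2, hqL.2, sq_nonneg (p 1 * q 2 - p 2 * q 1),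
        sq_nonneg (p 1 * q 3 - p 3 * q 1), sq_nonneg (p 2 * q 3 - p 3 * q 2),
        mul_nonneg hpL.1 hqL.1, sq_nonneg (p 0 - q 0), sq_nonneg (p 0 + q 0),
        sq_nonneg (p 1 * q 1 + p 2 * q 2 + p 3 * q 3)]
  obtain ⟨Qd, hQddef⟩ : ∃ x : ℝ, x = Λ 0 * (p 0 - q 0)^2 - Λ 1 * (p 1 - q 1)^2
      - Λ 2 * (p 2 - q 2)^2 - Λ 3 * (p 3 - q 3)^2 := ⟨_, rfl⟩
  have hVm : V m = (V p + V q) / 2 - Qd / 8 := by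
    rw [hV m, hV p, hV q, hm0, hm1, hm2, hm3, hQddef]; ring
  have hQdneg : Qd < 0 := by
    have hle : Qd ≤ 0 := by
      have := hpmin m hmL
      rw [hVm] at this
      linarith [hVpq]
    rcases hle.lt_or_eq with h | h
    · exact h
    · exfalso
      have hVmp : V m ≤ V p := by rw [hVm, h]; linarith [hVpq]
      rcases htwo m hmL hVmp with heq | heq
    -- m = p or m = q forces p = q
      · have e0 : (p 0 + q 0) / 2 = p 0 := congrFun heq 0
        have e1 : (p 1 + q 1) / 2 = p 1 := congrFun heq 1
        have e2 : (p 2 + q 2) / 2 = p 2 := congrFun heq 2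
        have e3 : (p 3 + q 3) / 2 = p 3 := congrFun heq 3
        exact hpq (coords p q (by linarith) (by linarith) (by linarith) (by linarith))
      · have e0 : (p 0 + q 0) / 2 = q 0 := congrFun heq 0
        have e1 : (p 1 + q 1) / 2 = q 1 := congrFun heq 1
        have e2 : (p 2 + q 2) / 2 = q 2 := congrFun heq 2
        have e3 : (p 3 + q 3) / 2 = q 3 := congrFun heq 3
        exact hpq (coords p q (by linarith) (by linarith) (by linarith) (by linarith))
  rw [hQddef] at hQdneg
  -- the difference is spacelike
  have hds : (p 0 - q 0)^2 < (p 1 - q 1)^2 + (p 2 - q 2)^2 + (p 3 - q 3)^2 := by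
    nlinarith [mul_nonneg (sub_nonneg.mpr hΛ1.le) (sq_nonneg (p 1 - q 1)),
      mul_nonneg (sub_nonneg.mpr hΛ2.le) (sq_nonneg (p 2 - q 2)),
      mul_nonneg (sub_nonneg.mpr hΛ3.le) (sq_nonneg (p 3 - q 3)), sq_nonneg (p 0 - q 0)]
  -- both minima lie on the boundary of the cone
  have hbp : p 1 ^ 2 + p 2 ^ 2 + p 3 ^ 2 = p 0 ^ 2 :=
    on_boundary Λ M V hV p q hpL hpmin hVpq hQdneg hds
  have hbq : q 1 ^ 2 + q 2 ^ 2 + q 3 ^ 2 = q 0 ^ 2 := by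
    refine on_boundary Λ M V hV q p hqL hqmin hVpq.symm (by nlinarith [hQdneg]) (by nlinarith [hds])
  -- both have positive time component
  have hp0pos : 0 < p 0 := by
    rcases hpL.1.lt_or_eq with h | h
    · exact h
    · exfalso
      have hsum : p 1 ^ 2 + p 2 ^ 2 + p 3 ^ 2 = 0 := by rw [hbp, ← h]; norm_num
      have h1 : p 1 = 0 := pow_eq_zero_iff two_ne_zero |>.mp
        (le_antisymm (by linarith [sq_nonneg (p 2), sq_nonneg (p 3)]) (sq_nonneg (p 1)))
      have h2 : p 2 = 0 := pow_eq_zero_iff two_ne_zero |>.mp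
        (le_antisymm (by linarith [sq_nonneg (p 1), sq_nonneg (p 3)]) (sq_nonneg (p 2)))
      have h3 : p 3 = 0 := pow_eq_zero_iff two_ne_zero |>.mp
        (le_antisymm (by linarith [sq_nonneg (p 1), sq_nonneg (p 2)]) (sq_nonneg (p 3)))
      rw [h1, h2, h3, ← h] at hds
      nlinarith [hbq, hds]
  have hq0pos : 0 < q 0 := by
    rcases hqL.1.lt_or_eq with h | h
    · exact h
    · exfalso
      have hsum : q 1 ^ 2 + q 2 ^ 2 + q 3 ^ 2 = 0 := by rw [hbq, ← h]; norm_num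
      have h1 : q 1 = 0 := pow_eq_zero_iff two_ne_zero |>.mp
        (le_antisymm (by linarith [sq_nonneg (q 2), sq_nonneg (q 3)]) (sq_nonneg (q 1)))
      have h2 : q 2 = 0 := pow_eq_zero_iff two_ne_zero |>.mp
        (le_antisymm (by linarith [sq_nonneg (q 1), sq_nonneg (q 3)]) (sq_nonneg (q 2)))
      have h3 : q 3 = 0 := pow_eq_zero_iff two_ne_zero |>.mp
        (le_antisymm (by linarith [sq_nonneg (q 1), sq_nonneg (q 2)]) (sq_nonneg (q 3)))
      rw [h1, h2, h3, ← h] at hds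
      nlinarith [hbp, hds]
  -- Lagrange multipliers
  obtain ⟨μ, hμ0, hμa, hμb, hμc, hμd⟩ := farkas4 (p 0) (p 1) (p 2) (p 3)
    (Λ 0 * p 0 - M 0) (M 1 - Λ 1 * p 1) (M 2 - Λ 2 * p 2) (M 3 - Λ 3 * p 3) hp0pos
    (fun v0 v1 v2 v3 h => grad_nonneg Λ M V hV p hpL hpmin hp0pos v0 v1 v2 v3 h)
  obtain ⟨ν, hν0, hνa, hνb, hνc, hνd⟩ := farkas4 (q 0) (q 1) (q 2) (q 3)
    (Λ 0 * q 0 - M 0) (M 1 - Λ 1 * q 1) (M 2 - Λ 2 * q 2) (M 3 - Λ 3 * q 3) hq0pos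
    (fun v0 v1 v2 v3 h => grad_nonneg Λ M V hV q hqL hqmin hq0pos v0 v1 v2 v3 h)
  -- η(p,q) > 0
  have hetapq : 0 < p 0 * q 0 - p 1 * q 1 - p 2 * q 2 - p 3 * q 3 := by nlinarith [hbp, hbq, hds]
  -- Taylor identities give the same multiplier at both minima
  have hT1 : V q = V p + ((Λ 0 * p 0 - M 0) * (q 0 - p 0) + (M 1 - Λ 1 * p 1) * (q 1 - p 1)
      + (M 2 - Λ 2 * p 2) * (q 2 - p 2) + (M 3 - Λ 3 * p 3) * (q 3 - p 3))
      + (1/2) * (Λ 0 * (q 0 - p 0)^2 - Λ 1 * (q 1 - p 1)^2 - Λ 2 * (q 2 - p 2)^2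
          - Λ 3 * (q 3 - p 3)^2) := by
    rw [hV q, hV p]; ring
  have hT2 : V p = V q + ((Λ 0 * q 0 - M 0) * (p 0 - q 0) + (M 1 - Λ 1 * q 1) * (p 1 - q 1)
      + (M 2 - Λ 2 * q 2) * (p 2 - q 2) + (M 3 - Λ 3 * q 3) * (p 3 - q 3))
      + (1/2) * (Λ 0 * (p 0 - q 0)^2 - Λ 1 * (p 1 - q 1)^2 - Λ 2 * (p 2 - q 2)^2
          - Λ 3 * (p 3 - q 3)^2) := by
    rw [hV q, hV p]; ring
  have hμquad : μ * (p 0 * q 0 - p 1 * q 1 - p 2 * q 2 - p 3 * q 3)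
      = -(1/2) * (Λ 0 * (p 0 - q 0)^2 - Λ 1 * (p 1 - q 1)^2 - Λ 2 * (p 2 - q 2)^2
          - Λ 3 * (p 3 - q 3)^2) := by
    linear_combination (-1 : ℝ) * hT1 + (-1 : ℝ) * hVpq + (p 0 - q 0) * hμa
      + (p 1 - q 1) * hμb + (p 2 - q 2) * hμc + (p 3 - q 3) * hμd - μ * hbp
  have hνquad : ν * (p 0 * q 0 - p 1 * q 1 - p 2 * q 2 - p 3 * q 3)
      = -(1/2) * (Λ 0 * (p 0 - q 0)^2 - Λ 1 * (p 1 - q 1)^2 - Λ 2 * (p 2 - q 2)^2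
          - Λ 3 * (p 3 - q 3)^2) := by
    linear_combination (-1 : ℝ) * hT2 + hVpq + (q 0 - p 0) * hνa
      + (q 1 - p 1) * hνb + (q 2 - p 2) * hνc + (q 3 - p 3) * hνd - ν * hbq
  have hμν : μ = ν := by
    have h := sub_eq_zero.mpr (hμquad.trans hνquad.symm)
    have h2 : (μ - ν) * (p 0 * q 0 - p 1 * q 1 - p 2 * q 2 - p 3 * q 3) = 0 := by
      linear_combination hμquad - hνquad
    rcases mul_eq_zero.mp h2 with h3 | h3
    · exact sub_eq_zero.mp h3
    · exact absurd h3 (ne_of_gt hetapq)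
  -- eigenvalue equations kill the differing component's M
  have key1 : (Λ 1 - μ) * (p 1 - q 1) = 0 := by
    rw [hμν] at hμb ⊢
    linear_combination hνb - hμb
  have key2 : (Λ 2 - μ) * (p 2 - q 2) = 0 := by
    rw [hμν] at hμc ⊢
    linear_combination hνc - hμc
  have key3 : (Λ 3 - μ) * (p 3 - q 3) = 0 := by
    rw [hμν] at hμd ⊢
    linear_combination hνd - hμd
  have hdiff : p 1 ≠ q 1 ∨ p 2 ≠ q 2 ∨ p 3 ≠ q 3 := by
    by_contra h
    push_neg at h
    obtain ⟨h1, h2, h3⟩ := h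
    rw [h1, h2, h3] at hds
    linarith [hds, sq_nonneg (p 0 - q 0)]
  obtain ⟨k, hk0, hMk, hkne⟩ : ∃ k : Fin 4, k ≠ 0 ∧ M k = 0 ∧ p k ≠ q k := by
    rcases hdiff with h | h | h
    · refine ⟨1, by decide, ?_, h⟩
      have hl : Λ 1 - μ = 0 := by
        rcases mul_eq_zero.mp key1 with h' | h'
        · exact h'
        · exact absurd (sub_eq_zero.mp h') h
      linear_combination hμb + p 1 * hl
    · refine ⟨2, by decide, ?_, h⟩
      have hl : Λ 2 - μ = 0 := by
        rcases mul_eq_zero.mp key2 with h' | h'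
        · exact h'
        · exact absurd (sub_eq_zero.mp h') h
      linear_combination hμc + p 2 * hl
    · refine ⟨3, by decide, ?_, h⟩
      have hl : Λ 3 - μ = 0 := by
        rcases mul_eq_zero.mp key3 with h' | h'
        · exact h'
        · exact absurd (sub_eq_zero.mp h') h
      linear_combination hμd + p 3 * hl
  -- the Z₂ flip exchanges the two minima
  by_cases hpk : p k = 0
  · exfalso
    have hqk : q k ≠ 0 := fun h => hkne (hpk.trans h.symm)
    obtain ⟨hrL, hrV⟩ := flip_lemma Λ M V hV k hk0 hMk q hqL
    rcases htwo _ hrL (le_of_eq (hrV.trans hVpq.symm)) with h | h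
    · have hk' : (if k = k then -(q k) else q k) = p k := congrFun h k
      rw [if_pos rfl] at hk'
      exact hqk (by linarith)
    · have hk' : (if k = k then -(q k) else q k) = q k := congrFun h k
      rw [if_pos rfl] at hk'
      exact hqk (by linarith)
  · obtain ⟨hrL, hrV⟩ := flip_lemma Λ M V hV k hk0 hMk p hpL
    rcases htwo _ hrL (le_of_eq hrV) with h | h
    · exfalso
      have hk' : (if k = k then -(p k) else p k) = p k := congrFun h k
      rw [if_pos rfl] at hk'
      exact hpk (by linarith)
    · refine ⟨k, hk0, hMk, ?_, hpk, ?_⟩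
      · have hk' : (if k = k then -(p k) else p k) = q k := congrFun h k
        rw [if_pos rfl] at hk'
        linarith
      · intro j hj
        have hj' : (if j = k then -(p j) else p j) = q j := congrFun h j
        rw [if_neg hj] at hj'
        exact hj'
end

section
/- Let Λ₀, Λ₁, Λ₂, Λ₃ and M₀, M₁, M₂, M₃ be real numbers with Λ₀ > 0 and Λ₀ > Λᵢ for i = 1,2,3, and define V : ℝ⁴ → ℝ by V(r) = (1/2)(Λ₀ r₀² − Λ₁ r₁² − Λ₂ r₂² − Λ₃ r₃²) − (M₀ r₀ − M₁ r₁ − M₂ r₂ − M₃ r₃). Suppose V attains its global minimum over the forward lightcone LC⁺ at exactly two distinct points p and q, and that for some index k ∈ {1,2,3} one has p_k = −q_k ≠ 0 while p_j = q_j for every coordinate index j ≠ k. Then Λ_k > 0 and Λ_k > Λ_j for every j ∈ {1,2,3} with j ≠ k. -/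
lemma fin4_cases (k : Fin 4) (hk : k ≠ 0) : k = 1 ∨ k = 2 ∨ k = 3 := by
  fin_cases k <;> simp_all

lemma V_update (Λ M : Fin 4 → ℝ) (V : (Fin 4 → ℝ) → ℝ)
    (hV : ∀ r, V r = (1 / 2 : ℝ) *
        (Λ 0 * (r 0) ^ 2 - Λ 1 * (r 1) ^ 2 - Λ 2 * (r 2) ^ 2 - Λ 3 * (r 3) ^ 2)
      - (M 0 * r 0 - M 1 * r 1 - M 2 * r 2 - M 3 * r 3))
    (k : Fin 4) (hk : k ≠ 0) (r : Fin 4 → ℝ) (t : ℝ) :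
    V (Function.update r k t) = V r - (Λ k / 2) * (t ^ 2 - (r k) ^ 2) + M k * (t - r k) := by
  rcases fin4_cases k hk with h | h | h <;> subst h <;>
    rw [hV, hV] <;>
    simp only [Function.update_apply] <;>
    norm_num [show ((0:Fin 4) ≠ 1) from by decide, show ((2:Fin 4) ≠ 1) from by decide,
      show ((3:Fin 4) ≠ 1) from by decide, show ((0:Fin 4) ≠ 2) from by decide,
      show ((1:Fin 4) ≠ 2) from by decide, show ((3:Fin 4) ≠ 2) from by decide,
      show ((0:Fin 4) ≠ 3) from by decide, show ((1:Fin 4) ≠ 3) from by decide,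
      show ((2:Fin 4) ≠ 3) from by decide] <;>
    ring

lemma mem_update (r : Fin 4 → ℝ) (hr : r ∈ LCplus) (k : Fin 4) (hk : k ≠ 0)
    (t : ℝ) (h : t ^ 2 ≤ (r k) ^ 2) : Function.update r k t ∈ LCplus := by
  obtain ⟨h0, h1⟩ := hr
  rcases fin4_cases k hk with hc | hc | hc <;> subst hc <;>
    refine ⟨?_, ?_⟩ <;>
    simp only [Function.update_apply] <;>
    norm_num [show ((0:Fin 4) ≠ 1) from by decide, show ((2:Fin 4) ≠ 1) from by decide,
      show ((3:Fin 4) ≠ 1) from by decide, show ((0:Fin 4) ≠ 2) from by decide,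
      show ((1:Fin 4) ≠ 2) from by decide, show ((3:Fin 4) ≠ 2) from by decide,
      show ((0:Fin 4) ≠ 3) from by decide, show ((1:Fin 4) ≠ 3) from by decide,
      show ((2:Fin 4) ≠ 3) from by decide] <;>
    nlinarith [h, h1, h0]

lemma mem_update2 (r : Fin 4 → ℝ) (hr : r ∈ LCplus) (k j : Fin 4) (hk : k ≠ 0) (hj : j ≠ 0)
    (hjk : j ≠ k) (t u : ℝ) (h : t ^ 2 + u ^ 2 ≤ (r k) ^ 2 + (r j) ^ 2) :
    Function.update (Function.update r k t) j u ∈ LCplus := by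
  obtain ⟨h0, h1⟩ := hr
  rcases fin4_cases k hk with hc | hc | hc <;> rcases fin4_cases j hj with hd | hd | hd <;>
    subst hc <;> subst hd <;> first
  | exact absurd rfl hjk
  | (refine ⟨?_, ?_⟩ <;>
     simp only [Function.update_apply] <;>
     norm_num [show ((0:Fin 4) ≠ 1) from by decide, show ((2:Fin 4) ≠ 1) from by decide,
       show ((3:Fin 4) ≠ 1) from by decide, show ((0:Fin 4) ≠ 2) from by decide,
       show ((1:Fin 4) ≠ 2) from by decide, show ((3:Fin 4) ≠ 2) from by decide,
       show ((0:Fin 4) ≠ 3) from by decide, show ((1:Fin 4) ≠ 3) from by decide,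
       show ((2:Fin 4) ≠ 3) from by decide] <;>
     nlinarith [h, h1, h0])

/-- Proposition 5: if the global minimum of the 2HDM potential spontaneously violates
the `Z₂` symmetry along the `k`-th spacelike eigenaxis, then `Λ k` is positive and is
the largest spacelike eigenvalue. -/
theorem stmt_3 (Λ M : Fin 4 → ℝ)
    (hΛ0 : 0 < Λ 0) (hΛ : ∀ i : Fin 4, i ≠ 0 → Λ i < Λ 0)
    (V : (Fin 4 → ℝ) → ℝ)
    (hV : ∀ r, V r = (1 / 2 : ℝ) *
        (Λ 0 * (r 0) ^ 2 - Λ 1 * (r 1) ^ 2 - Λ 2 * (r 2) ^ 2 - Λ 3 * (r 3) ^ 2)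
      - (M 0 * r 0 - M 1 * r 1 - M 2 * r 2 - M 3 * r 3))
    (p q : Fin 4 → ℝ) (hpq : p ≠ q)
    (hmin : {r | r ∈ LCplus ∧ ∀ s ∈ LCplus, V r ≤ V s} = {p, q})
    (k : Fin 4) (hk : k ≠ 0)
    (hflip : p k = -q k) (hk0 : p k ≠ 0)
    (hfix : ∀ j : Fin 4, j ≠ k → p j = q j) :
    0 < Λ k ∧ ∀ j : Fin 4, j ≠ 0 → j ≠ k → Λ j < Λ k := by
  have hp : p ∈ LCplus ∧ ∀ s ∈ LCplus, V p ≤ V s := by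
    have h : p ∈ ({p, q} : Set (Fin 4 → ℝ)) := Set.mem_insert _ _
    rw [← hmin] at h; exact h
  have hq : q ∈ LCplus ∧ ∀ s ∈ LCplus, V q ≤ V s := by
    have h : q ∈ ({p, q} : Set (Fin 4 → ℝ)) := Set.mem_insert_of_mem _ rfl
    rw [← hmin] at h; exact h
  have hVpq : V p = V q := le_antisymm (hp.2 q hq.1) (hq.2 p hp.1)
  have hq_eq : q = Function.update p k (-(p k)) := by
    funext j
    rcases eq_or_ne j k with rfl | hj
    · rw [Function.update_self]; linarith [hflip]
    · rw [Function.update_of_ne hj, ← hfix j hj]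
  have hMk : M k = 0 := by
    have h := V_update Λ M V hV k hk p (-(p k))
    rw [← hq_eq] at h
    have h3 : M k * p k = 0 := by linear_combination (hVpq + h) / 2
    rcases mul_eq_zero.1 h3 with h' | h'
    · exact h'
    · exact absurd h' hk0
  have hpk2 : 0 < (p k) ^ 2 := by positivity
  -- the point with the k-th coordinate set to 0 is in the lightcone
  have hs0mem : Function.update p k 0 ∈ LCplus :=
    mem_update p hp.1 k hk 0 (by nlinarith)
  have hVs0 : V (Function.update p k 0) = V p + (Λ k / 2) * (p k) ^ 2 := by
    rw [V_update Λ M V hV k hk p 0, hMk]; ring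
  constructor
  · by_contra hneg
    push_neg at hneg
    rcases lt_or_eq_of_le hneg with hlt | heq
    · have : V (Function.update p k 0) < V p := by nlinarith
      exact absurd (hp.2 _ hs0mem) (not_le.2 this)
    · have hVeq : V (Function.update p k 0) = V p := by rw [hVs0, heq]; ring
      have hsmin : Function.update p k 0 ∈ ({p, q} : Set (Fin 4 → ℝ)) := by
        rw [← hmin]
        exact ⟨hs0mem, fun r hr => hVeq ▸ hp.2 r hr⟩
      have hsk : Function.update p k 0 k = 0 := Function.update_self k 0 p
      rcases hsmin with h' | h'
      · exact hk0 (h' ▸ hsk)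
      · have hq0 : q k = 0 := h' ▸ hsk
        exact hk0 (by rw [hflip, hq0, neg_zero])
  · intro j hj0 hjk
    by_contra hge
    push_neg at hge
    set c := Real.sqrt ((p j) ^ 2 + (p k) ^ 2) with hc
    have hcnn : 0 ≤ c := Real.sqrt_nonneg _
    have hc2 : c ^ 2 = (p j) ^ 2 + (p k) ^ 2 := Real.sq_sqrt (by positivity)
    set u : ℝ := if 0 ≤ M j then -c else c with hu
    have hu2 : u ^ 2 = c ^ 2 := by rw [hu]; split <;> ring
    set s : Fin 4 → ℝ := Function.update (Function.update p k 0) j u with hs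
    have hsmem : s ∈ LCplus := by
      apply mem_update2 p hp.1 k j hk hj0 hjk
      rw [hu2, hc2]; nlinarith
    have hpj : (Function.update p k 0) j = p j := Function.update_of_ne hjk 0 p
    have hVs : V s = V p + ((Λ k - Λ j) / 2) * (p k) ^ 2 + M j * (u - p j) := by
      rw [hs, V_update Λ M V hV j hj0 _ u, hVs0, hpj, hu2, hc2]; ring
    have hMju : M j * (u - p j) ≤ 0 := by
      rw [hu]; split
      · rename_i hMj
        have h1 : -c ≤ p j := by nlinarith
        nlinarith
      · rename_i hMj
        have h1 : p j ≤ c := by nlinarith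
        nlinarith
    have hA : ((Λ k - Λ j) / 2) * (p k) ^ 2 ≤ 0 := by nlinarith
    have hle : V p ≤ V s := hp.2 s hsmem
    have hVeq : V s = V p := by linarith
    have hsmin : s ∈ ({p, q} : Set (Fin 4 → ℝ)) := by
      rw [← hmin]
      exact ⟨hsmem, fun r hr => hVeq ▸ hp.2 r hr⟩
    have hsk : s k = 0 := by
      rw [hs, Function.update_of_ne (Ne.symm hjk), Function.update_self]
    rcases hsmin with h' | h'
    · exact hk0 (h' ▸ hsk)
    · have hq0 : q k = 0 := h' ▸ hsk
      exact hk0 (by rw [hflip, hq0, neg_zero])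
end

section
/- Let A be a real symmetric 3×3 matrix and let M, K ∈ ℝ³. Let G be the subgroup of the orthogonal group O(3) consisting of all R with R·A·Rᵀ = A, R·M = M and R·K = K. Then G is nontrivial (contains an element other than the identity) if and only if there exists a nonzero vector v ∈ ℝ³ that is an eigenvector of A and satisfies ⟨v, M⟩ = 0 and ⟨v, K⟩ = 0. -/
/-!
If `v` is an eigenvector of `A` orthogonal to `M` and `K`, the reflection in `v⊥` is a
nontrivial orthogonal matrix commuting with `A` and fixing `M` and `K`. Conversely, an
orthogonal `R` with `R A Rᵀ = A` commutes with `A`, so `A` preserves the fixed space of `R`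
and, being symmetric, also its orthogonal complement. That complement is nonzero when `R ≠ 1`,
and an eigenvector of `A` inside it is orthogonal to every vector fixed by `R`, in particular
to `M` and `K`.
-/

open Module.End WithLp

namespace LinearMap.IsSymmetric

variable {𝕜 E : Type*} [RCLike 𝕜] [NormedAddCommGroup E] [InnerProductSpace 𝕜 E] {T : E →ₗ[𝕜] E}

theorem mapsTo_orthogonal (hT : T.IsSymmetric) {U : Submodule 𝕜 E} (hU : Set.MapsTo T U U) :
    Set.MapsTo T Uᗮ Uᗮ := fun x hx y hy => by
  rw [← hT]
  exact hx _ (hU hy)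

variable [FiniteDimensional 𝕜 E]

theorem exists_hasEigenvector_mem (hT : T.IsSymmetric) {U : Submodule 𝕜 E}
    (hU : Set.MapsTo T U U) (hU0 : U ≠ ⊥) : ∃ (μ : 𝕜) (v : E), v ∈ U ∧ HasEigenvector T μ v := by
  have : Nontrivial U := Submodule.nontrivial_iff_ne_bot.mpr hU0
  obtain ⟨w, hw_mem, hw_ne⟩ :=
    (hT.restrict_invariant hU).hasEigenvalue_iSup_of_finiteDimensional.exists_hasEigenvector
  exact ⟨_, w, w.2, mem_eigenspace_iff.mpr (congrArg Subtype.val (mem_eigenspace_iff.mp hw_mem)),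
    fun h => hw_ne (Subtype.ext h)⟩

theorem exists_hasEigenvector_mem_orthogonal_eigenspace (hT : T.IsSymmetric) {S : E →ₗ[𝕜] E}
    (hST : Commute T S) {c : 𝕜} (hS : S ≠ c • 1) :
    ∃ (μ : 𝕜) (v : E), v ∈ (eigenspace S c)ᗮ ∧ HasEigenvector T μ v := by
  refine hT.exists_hasEigenvector_mem (hT.mapsTo_orthogonal ?_) ?_
  · exact mapsTo_genEigenspace_of_comm hST.symm c 1
  · rw [Ne, Submodule.orthogonal_eq_bot_iff, eq_top_iff]
    refine fun h => hS (LinearMap.ext fun x => ?_)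
    exact mem_eigenspace_iff.mp (h Submodule.mem_top)

end LinearMap.IsSymmetric

namespace Matrix

variable {n : Type*} [Fintype n] [DecidableEq n]

section Householder

variable {K : Type*} [Field K]

def householder (v : n → K) : Matrix n n K :=
  1 - (2 / (v ⬝ᵥ v)) • vecMulVec v v

theorem householder_mulVec (v w : n → K) :
    householder v *ᵥ w = w - (2 / (v ⬝ᵥ v) * (v ⬝ᵥ w)) • v := by
  simp only [householder, sub_mulVec, one_mulVec, smul_mulVec, vecMulVec_mulVec, op_smul_eq_smul,
    smul_smul]

theorem householder_mulVec_of_dotProduct_eq_zero {v w : n → K} (h : v ⬝ᵥ w = 0) :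
    householder v *ᵥ w = w := by
  simp [householder_mulVec, h]

theorem householder_mulVec_self {v : n → K} (hv : v ⬝ᵥ v ≠ 0) : householder v *ᵥ v = -v := by
  rw [householder_mulVec, div_mul_cancel₀ _ hv, two_smul]
  abel

theorem transpose_householder (v : n → K) : (householder v)ᵀ = householder v := by
  simp [householder, transpose_sub, transpose_smul, transpose_vecMulVec]

theorem householder_mul_self {v : n → K} (hv : v ⬝ᵥ v ≠ 0) :
    householder v * householder v = 1 := by
  refine ext_iff_mulVec.mpr fun w => ?_
  rw [← mulVec_mulVec, householder_mulVec v w, mulVec_sub, mulVec_smul, householder_mulVec_self hv,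
    one_mulVec, householder_mulVec]
  simp

theorem householder_mem_orthogonalGroup {v : n → K} (hv : v ⬝ᵥ v ≠ 0) :
    householder v ∈ orthogonalGroup n K := by
  rw [mem_orthogonalGroup_iff, transpose_householder, householder_mul_self hv]

theorem householder_ne_one [NeZero (2 : K)] {v : n → K} (hv : v ⬝ᵥ v ≠ 0) :
    householder v ≠ 1 := by
  intro h
  have hneg : -v = v := by rw [← householder_mulVec_self hv, h, one_mulVec]
  have htwo : (2 : K) • v = 0 := by rw [two_smul, ← neg_add_cancel v, hneg]
  simp [(smul_eq_zero.mp htwo).resolve_left two_ne_zero] at hv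

theorem commute_householder {A : Matrix n n K} (hA : A.IsSymm) {v : n → K} {μ : K}
    (hv : A *ᵥ v = μ • v) : Commute A (householder v) := by
  have hdot : ∀ w, v ⬝ᵥ A *ᵥ w = μ * (v ⬝ᵥ w) := fun w => by
    rw [dotProduct_mulVec, ← mulVec_transpose, hA.eq, hv, smul_dotProduct, smul_eq_mul]
  refine ext_iff_mulVec.mpr fun w => ?_
  rw [← mulVec_mulVec, ← mulVec_mulVec, householder_mulVec, householder_mulVec, mulVec_sub,
    mulVec_smul, hv, hdot, smul_smul]
  ring_nf

end Householder

theorem mul_mul_transpose_eq_iff_commute {α : Type*} [CommRing α] {R A : Matrix n n α}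
    (hR : R ∈ orthogonalGroup n α) : R * A * Rᵀ = A ↔ Commute R A := by
  constructor
  · intro hRA
    calc R * A = R * A * (Rᵀ * R) := by rw [(mem_orthogonalGroup_iff' n α).mp hR, mul_one]
      _ = A * R := by rw [← mul_assoc, hRA]
  · intro hRA
    rw [hRA.eq, mul_assoc, (mem_orthogonalGroup_iff n α).mp hR, mul_one]

theorem IsSymm.exists_eigenvector_orthogonal_fixedPoints {A R : Matrix n n ℝ} (hA : A.IsSymm)
    (hRA : Commute R A) (hR : R ≠ 1) :
    ∃ v ≠ 0, (∃ μ : ℝ, A *ᵥ v = μ • v) ∧ ∀ x, R *ᵥ x = x → v ⬝ᵥ x = 0 := by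
  have hT : (toEuclideanLin A).IsSymmetric :=
    isSymmetric_toEuclideanLin_iff.mpr (isHermitian_iff_isSymm.mpr hA)
  have hST : Commute (toEuclideanLin A) (toEuclideanLin R) := by
    have h := congrArg toEuclideanLin hRA.eq.symm
    rw [toLpLin_mul_same, toLpLin_mul_same] at h
    exact h
  have hS : toEuclideanLin R ≠ (1 : ℝ) • 1 := fun h => hR <| toEuclideanLin.injective <| by
    simpa [one_eq_id] using h
  obtain ⟨μ, w, hw_orth, hw_mem, hw_ne⟩ :=
    hT.exists_hasEigenvector_mem_orthogonal_eigenspace hST hS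
  refine ⟨ofLp w, by simpa using hw_ne,
    ⟨μ, by simpa using congrArg ofLp (mem_eigenspace_iff.mp hw_mem)⟩, fun x hx => ?_⟩
  have hx_mem : toLp 2 x ∈ eigenspace (toEuclideanLin R) 1 :=
    mem_eigenspace_iff.mpr (by simp [toLpLin_apply, hx])
  simpa [EuclideanSpace.inner_eq_star_dotProduct] using
    Submodule.inner_right_of_mem_orthogonal hx_mem hw_orth

end Matrix

open Matrix

/-- Proposition 2(a) (spacelike reduction): the group of common orthogonal symmetries
of `A`, `M`, `K` is nontrivial iff there is a nonzero eigenvector of `A` orthogonal to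
both `M` and `K`. -/
theorem stmt_6 (A : Matrix (Fin 3) (Fin 3) ℝ) (hA : A.IsSymm)
    (M K : Fin 3 → ℝ)
    (G : Set (Matrix (Fin 3) (Fin 3) ℝ))
    (hG : G = {R | R ∈ Matrix.orthogonalGroup (Fin 3) ℝ ∧
      R * A * Rᵀ = A ∧ R.mulVec M = M ∧ R.mulVec K = K}) :
    (∃ R ∈ G, R ≠ 1) ↔
      ∃ v : Fin 3 → ℝ, v ≠ 0 ∧ (∃ lam : ℝ, A.mulVec v = lam • v) ∧
        v ⬝ᵥ M = 0 ∧ v ⬝ᵥ K = 0 := by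
  subst hG
  constructor
  · rintro ⟨R, ⟨hR, hRA, hRM, hRK⟩, hR1⟩
    obtain ⟨v, hv, hAv, horth⟩ := hA.exists_eigenvector_orthogonal_fixedPoints
      ((mul_mul_transpose_eq_iff_commute hR).mp hRA) hR1
    exact ⟨v, hv, hAv, horth M hRM, horth K hRK⟩
  · rintro ⟨v, hv, ⟨μ, hAv⟩, hvM, hvK⟩
    have hvv : v ⬝ᵥ v ≠ 0 := fun h => hv (dotProduct_self_eq_zero.mp h)
    have hH := householder_mem_orthogonalGroup hvv
    have hHA : Commute (householder v) A := (commute_householder hA hAv).symm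
    exact ⟨householder v, ⟨hH, (mul_mul_transpose_eq_iff_commute hH).mpr hHA,
      householder_mulVec_of_dotProduct_eq_zero hvM, householder_mulVec_of_dotProduct_eq_zero hvK⟩,
      householder_ne_one hvv⟩
end

section
/- Let η be the Minkowski bilinear form on ℝ⁴, η(x, y) = x₀y₀ − x₁y₁ − x₂y₂ − x₃y₃, and let A : ℝ⁴ → ℝ⁴ be a linear map that is η-self-adjoint (η(Ax, y) = η(x, Ay) for all x, y) and diagonalizable over ℝ (ℝ⁴ has a basis of eigenvectors of A). Then for any K ∈ ℝ⁴, the four vectors K, A·K, A²·K, A³·K are linearly dependent if and only if there exists a nonzero eigenvector v of A with η(v, K) = 0. -/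
/-!
If an eigenvector `v` (eigenvalue `μ`) is `η`-orthogonal to `K`, self-adjointness gives
`η(v, Aᵏ K) = μᵏ η(v, K) = 0`, so `K, …, A³K` lie in the hyperplane `η(v, ·) = 0` and cannot
span `ℝ⁴`. Conversely, if no eigenvector is orthogonal to `K`, the eigenvalues `λᵢ` are pairwise
distinct (two eigenvectors of equal eigenvalue have a combination orthogonal to `K`), so the
eigenbasis is `η`-orthogonal and every coordinate `cᵢ` of `K` in it is nonzero. The coordinates of
`Aᵏ K` are `λᵢᵏ cᵢ`, and the Vandermonde determinant of the distinct `λᵢ` gives independence.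
-/

open Module

section Krylov

variable {𝕜 V : Type*} [Field 𝕜] [AddCommGroup V] [Module 𝕜 V] {A : End 𝕜 V}

theorem Module.Basis.repr_pow_apply_of_eigenbasis {ι : Type*} (b : Basis ι 𝕜 V) {lam : ι → 𝕜}
    (hb : ∀ i, A (b i) = lam i • b i) (k : ℕ) (x : V) (i : ι) :
    b.repr ((A ^ k) x) i = lam i ^ k * b.repr x i := by
  have hA : (b.coord i).comp A = lam i • b.coord i := by
    refine b.ext fun j => ?_
    rcases eq_or_ne j i with rfl | hji
    · simp [hb]
    · simp [hb, hji.symm]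
  induction k with
  | zero => simp
  | succ k ih =>
    rw [pow_succ', End.mul_apply, ← b.coord_apply, ← LinearMap.comp_apply, hA,
      LinearMap.smul_apply, b.coord_apply, ih, smul_eq_mul, pow_succ', mul_assoc]

theorem linearIndependent_pow_apply_of_eigenbasis {n : ℕ} (b : Basis (Fin n) 𝕜 V) {lam : Fin n → 𝕜}
    (hb : ∀ i, A (b i) = lam i • b i) (hlam : Function.Injective lam) {x : V}
    (hx : ∀ i, b.repr x i ≠ 0) :
    LinearIndependent 𝕜 fun k : Fin n => (A ^ (k : ℕ)) x := by
  rw [Fintype.linearIndependent_iff]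
  intro a ha
  refine congrFun (Matrix.eq_zero_of_forall_index_sum_mul_pow_eq_zero hlam fun i => ?_)
  have hi := congrArg (fun y => b.repr y i) ha
  simp only [map_sum, map_smul, Finsupp.coe_finsetSum, Finsupp.coe_smul, Finset.sum_apply,
    Pi.smul_apply, b.repr_pow_apply_of_eigenbasis hb, smul_eq_mul, map_zero,
    Finsupp.coe_zero, Pi.zero_apply, ← mul_assoc, ← Finset.sum_mul] at hi
  exact (mul_eq_zero.mp hi).resolve_right (hx i)

theorem injective_eigenvalues_of_forall_hasEigenvector {ι : Type*} (b : Basis ι 𝕜 V)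
    {lam : ι → 𝕜} (hb : ∀ i, A (b i) = lam i • b i) (φ : V →ₗ[𝕜] 𝕜)
    (hφ : ∀ μ v, A.HasEigenvector μ v → φ v ≠ 0) : Function.Injective lam := by
  intro i j hij
  by_contra hne
  have hbj : φ (b j) ≠ 0 := hφ _ _ ⟨End.mem_eigenspace_iff.mpr (hb j), b.ne_zero j⟩
  -- a combination of two eigenvectors of equal eigenvalue, chosen to lie in `ker φ`
  set v := φ (b j) • b i - φ (b i) • b j
  have hv : v ∈ A.eigenspace (lam i) := by
    refine sub_mem (Submodule.smul_mem _ _ ?_) (Submodule.smul_mem _ _ ?_) <;>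
      rw [End.mem_eigenspace_iff]
    · exact hb i
    · rw [hij]; exact hb j
  have hv0 : v ≠ 0 := fun h => by
    have := congrArg (fun y => b.repr y i) h
    simp [v, Ne.symm hne, hbj] at this
  exact hφ _ _ ⟨hv, hv0⟩ (by simp [v, mul_comm])

variable {B : LinearMap.BilinForm 𝕜 V}

namespace LinearMap.IsAdjointPair

theorem apply_eq_zero_of_eigenvalues_ne (hA : IsAdjointPair B B A A) {x y : V} {μ ν : 𝕜}
    (hx : A x = μ • x) (hy : A y = ν • y) (hμν : μ ≠ ν) : B x y = 0 := by
  have h := hA x y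
  rw [hx, hy, map_smul, map_smul, LinearMap.smul_apply, smul_eq_mul, smul_eq_mul] at h
  exact (mul_eq_zero.mp (by linear_combination h : (μ - ν) * B x y = 0)).resolve_left
    (sub_ne_zero.mpr hμν)

theorem apply_pow_apply_of_eigenvector (hA : IsAdjointPair B B A A) {v : V} {μ : 𝕜}
    (hv : A v = μ • v) (k : ℕ) (x : V) : B v ((A ^ k) x) = μ ^ k * B v x := by
  induction k with
  | zero => simp
  | succ k ih =>
    rw [pow_succ', End.mul_apply, ← hA, hv, map_smul, LinearMap.smul_apply, ih, smul_eq_mul,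
      pow_succ', mul_assoc]

theorem linearIndependent_pow_apply_of_forall_hasEigenvector {n : ℕ} (hA : IsAdjointPair B B A A)
    (b : Basis (Fin n) 𝕜 V) {lam : Fin n → 𝕜} (hb : ∀ i, A (b i) = lam i • b i) {x : V}
    (hx : ∀ μ v, A.HasEigenvector μ v → B v x ≠ 0) :
    LinearIndependent 𝕜 fun k : Fin n => (A ^ (k : ℕ)) x := by
  have hbx : ∀ i, B (b i) x ≠ 0 := fun i =>
    hx _ _ ⟨End.mem_eigenspace_iff.mpr (hb i), b.ne_zero i⟩
  have hlam := injective_eigenvalues_of_forall_hasEigenvector b hb (B.flip x) hx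
  refine linearIndependent_pow_apply_of_eigenbasis b hb hlam fun i hi => hbx i ?_
  -- orthogonality of the eigenbasis leaves only the `i`-th term of `B (b i) x`
  rw [← b.sum_repr x, map_sum]
  refine Finset.sum_eq_zero fun j _ => ?_
  rcases eq_or_ne j i with rfl | hji
  · simp [hi]
  · rw [map_smul, smul_eq_mul,
      hA.apply_eq_zero_of_eigenvalues_ne (hb i) (hb j) (hlam.ne hji.symm), mul_zero]

theorem not_linearIndependent_pow_apply_of_eigenvector [FiniteDimensional 𝕜 V] {n : ℕ}
    (hB : B.SeparatingLeft) (hA : IsAdjointPair B B A A) (hn : finrank 𝕜 V = n) {v x : V}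
    {μ : 𝕜} (hv : A.HasEigenvector μ v) (hvx : B v x = 0) :
    ¬ LinearIndependent 𝕜 fun k : Fin n => (A ^ (k : ℕ)) x := by
  intro hli
  have hspan := hli.span_eq_top_of_card_eq_finrank' (by simp [hn])
  have hker : Submodule.span 𝕜 (Set.range fun k : Fin n => (A ^ (k : ℕ)) x) ≤ ker (B v) := by
    rw [Submodule.span_le]
    rintro _ ⟨k, rfl⟩
    simp [hA.apply_pow_apply_of_eigenvector hv.apply_eq_smul, hvx]
  rw [hspan, top_le_iff, ker_eq_top] at hker
  exact hv.2 (hB v fun y => by simp [hker])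

theorem not_linearIndependent_pow_apply_iff {n : ℕ} (hB : B.SeparatingLeft)
    (hA : IsAdjointPair B B A A) (b : Basis (Fin n) 𝕜 V) {lam : Fin n → 𝕜}
    (hb : ∀ i, A (b i) = lam i • b i) (x : V) :
    ¬ LinearIndependent 𝕜 (fun k : Fin n => (A ^ (k : ℕ)) x) ↔
      ∃ μ v, A.HasEigenvector μ v ∧ B v x = 0 := by
  have := b.finiteDimensional_of_finite
  constructor
  · intro hdep
    by_contra! hx
    exact hdep (hA.linearIndependent_pow_apply_of_forall_hasEigenvector b hb hx)
  · rintro ⟨μ, v, hv, hvx⟩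
    exact hA.not_linearIndependent_pow_apply_of_eigenvector hB
      ((finrank_eq_card_basis b).trans (Fintype.card_fin n)) hv hvx

end LinearMap.IsAdjointPair

end Krylov

noncomputable def minkowskiForm : LinearMap.BilinForm ℝ (Fin 4 → ℝ) :=
  Matrix.toBilin' (Matrix.diagonal ![1, -1, -1, -1])

theorem minkowskiForm_apply (x y : Fin 4 → ℝ) :
    minkowskiForm x y = x 0 * y 0 - x 1 * y 1 - x 2 * y 2 - x 3 * y 3 := by
  simp [minkowskiForm, Matrix.toBilin'_apply', Matrix.mulVec_diagonal, Fin.sum_univ_four,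
    dotProduct]
  ring

theorem minkowskiForm_separatingLeft : minkowskiForm.SeparatingLeft :=
  (LinearMap.BilinForm.nondegenerate_toBilin'_of_det_ne_zero' _ (by simp [Fin.prod_univ_four])).1

/-- The reparametrization-invariant criterion (eq. (9) of the paper): for an
`η`-self-adjoint, real-diagonalizable operator `A` on Minkowski `ℝ⁴`, the vectors
`K, AK, A²K, A³K` are linearly dependent iff `A` has an eigenvector `η`-orthogonal
to `K`. -/
theorem stmt_8 (η : (Fin 4 → ℝ) → (Fin 4 → ℝ) → ℝ)
    (hη : ∀ x y, η x y = x 0 * y 0 - x 1 * y 1 - x 2 * y 2 - x 3 * y 3)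
    (A : (Fin 4 → ℝ) →ₗ[ℝ] (Fin 4 → ℝ))
    (hsa : ∀ x y, η (A x) y = η x (A y))
    (hdiag : ∃ b : Module.Basis (Fin 4) ℝ (Fin 4 → ℝ), ∀ i, ∃ lam : ℝ, A (b i) = lam • b i)
    (K : Fin 4 → ℝ) :
    ¬ LinearIndependent ℝ ![K, A K, A (A K), A (A (A K))] ↔
      ∃ v : Fin 4 → ℝ, v ≠ 0 ∧ (∃ lam : ℝ, A v = lam • v) ∧ η v K = 0 := by
  obtain ⟨b, hb⟩ := hdiag
  choose lam hlam using hb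
  obtain rfl : η = fun x y => minkowskiForm x y := by
    ext x y; rw [hη, minkowskiForm_apply]
  have hkrylov : ![K, A K, A (A K), A (A (A K))] = fun k : Fin 4 => (A ^ (k : ℕ)) K := by
    ext k : 1; fin_cases k <;> simp [pow_succ, End.mul_apply]
  rw [hkrylov, LinearMap.IsAdjointPair.not_linearIndependent_pow_apply_iff
    minkowskiForm_separatingLeft hsa b hlam]
  simp only [End.hasEigenvector_iff, End.mem_eigenspace_iff]
  exact ⟨fun ⟨μ, v, ⟨hv, hv0⟩, hvK⟩ => ⟨v, hv0, ⟨μ, hv⟩, hvK⟩,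
    fun ⟨v, hv0, ⟨μ, hv⟩, hvK⟩ => ⟨μ, v, ⟨hv, hv0⟩, hvK⟩⟩
end

section
/- For every (r₀, r₁, r₂, r₃) ∈ ℝ⁴ with r₀ ≥ 0 and r₀² ≥ r₁² + r₂² + r₃², there exist vectors φ₁, φ₂ ∈ ℂ² such that r₀ = ‖φ₁‖² + ‖φ₂‖², r₁ = 2·Re⟨φ₁, φ₂⟩, r₂ = 2·Im⟨φ₁, φ₂⟩, and r₃ = ‖φ₁‖² − ‖φ₂‖², where ⟨·,·⟩ is the standard Hermitian inner product on ℂ² (conjugate-linear in the first argument). -/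
/-!
The four conditions say that the Gram matrix of `(φ₁, φ₂)` is `[[p, z], [conj z, q]]` with
`p = (r₀ + r₃) / 2`, `q = (r₀ - r₃) / 2`, `z = (r₁ + i r₂) / 2`, and the lightcone condition says
exactly that this Hermitian matrix is positive semidefinite: `p, q ≥ 0` and `|z|² ≤ p q`. Every
such matrix is the Gram matrix of two vectors in the plane, which can be taken in triangular form
`φ₁ = (√p, 0)`, `φ₂ = (z / √p, √(q - |z|² / p))`.
-/

open scoped ComplexConjugate

variable {𝕜 : Type*} [RCLike 𝕜]

lemma EuclideanSpace.norm_sq_fin_two (x y : 𝕜) : ‖!₂[x, y]‖ ^ 2 = ‖x‖ ^ 2 + ‖y‖ ^ 2 := by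
  simp [EuclideanSpace.norm_sq_eq, Fin.sum_univ_two]

lemma EuclideanSpace.inner_fin_two (x y z w : 𝕜) :
    inner 𝕜 !₂[x, y] !₂[z, w] = conj x * z + conj y * w := by
  simp [PiLp.inner_apply, Fin.sum_univ_two, mul_comm]

theorem exists_euclideanSpace_fin_two_norm_sq_inner_eq {p q : ℝ} (hp : 0 ≤ p) (hq : 0 ≤ q)
    {z : 𝕜} (hz : ‖z‖ ^ 2 ≤ p * q) :
    ∃ φ₁ φ₂ : EuclideanSpace 𝕜 (Fin 2),
      ‖φ₁‖ ^ 2 = p ∧ ‖φ₂‖ ^ 2 = q ∧ inner 𝕜 φ₁ φ₂ = z := by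
  set a := √p
  -- When `p = 0` this is `z / 0 = 0`, which is right since then `z = 0`.
  set w : 𝕜 := z / (a : 𝕜)
  have ha : a ^ 2 = p := Real.sq_sqrt hp
  have hwq : ‖w‖ ^ 2 ≤ q := by
    rw [norm_div, div_pow, RCLike.norm_ofReal, sq_abs, ha]
    exact div_le_of_le_mul₀ hp hq (by linarith)
  have haw : (a : 𝕜) * w = z := by
    rcases hp.eq_or_lt with rfl | hp
    · have : z = 0 := by simpa using hz
      simp [w, this]
    · exact mul_div_cancel₀ z (RCLike.ofReal_ne_zero.mpr (Real.sqrt_pos.mpr hp).ne')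
  refine ⟨!₂[(a : 𝕜), 0], !₂[w, (√(q - ‖w‖ ^ 2) : 𝕜)], ?_, ?_, ?_⟩
  · simp [EuclideanSpace.norm_sq_fin_two, ha]
  · simp [EuclideanSpace.norm_sq_fin_two, Real.sq_sqrt (sub_nonneg.mpr hwq)]
  · simp [EuclideanSpace.inner_fin_two, haw]

/-- Every point of the forward lightcone is realizable as the gauge-orbit
four-vector of a pair of Higgs doublets. -/
theorem stmt_12 (r₀ r₁ r₂ r₃ : ℝ)
    (h0 : 0 ≤ r₀) (hcone : r₁ ^ 2 + r₂ ^ 2 + r₃ ^ 2 ≤ r₀ ^ 2) :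
    ∃ φ₁ φ₂ : EuclideanSpace ℂ (Fin 2),
      r₀ = ‖φ₁‖ ^ 2 + ‖φ₂‖ ^ 2 ∧
      r₁ = 2 * (inner ℂ φ₁ φ₂ : ℂ).re ∧
      r₂ = 2 * (inner ℂ φ₁ φ₂ : ℂ).im ∧
      r₃ = ‖φ₁‖ ^ 2 - ‖φ₂‖ ^ 2 := by
  obtain ⟨hr₃_lower, hr₃_upper⟩ := abs_le_of_sq_le_sq' (show r₃ ^ 2 ≤ r₀ ^ 2 by nlinarith) h0
  set z : ℂ := ⟨r₁ / 2, r₂ / 2⟩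
  have hz : ‖z‖ ^ 2 ≤ (r₀ + r₃) / 2 * ((r₀ - r₃) / 2) := by
    rw [Complex.sq_norm, Complex.normSq_mk]
    nlinarith
  obtain ⟨φ₁, φ₂, h₁, h₂, hinner⟩ :=
    exists_euclideanSpace_fin_two_norm_sq_inner_eq (by linarith) (by linarith) hz
  refine ⟨φ₁, φ₂, ?_, ?_, ?_, ?_⟩ <;> simp only [h₁, h₂, hinner, z] <;> ring
end

section
/- Let Λ₀, Λ₁, Λ₂, Λ₃ be real numbers with Λ₀ > 0 and Λ₀ > Λᵢ for i = 1,2,3, and define the quadratic form Q(p) = Λ₀ p₀² − Λ₁ p₁² − Λ₂ p₂² − Λ₃ p₃² on ℝ⁴. Let m ∈ ℝ⁴ lie strictly inside the forward lightcone, i.e. m₀ > 0 and m₀² > m₁² + m₂² + m₃². Then the valley {r ∈ LC⁺ : Q(r − m) < 0} is nonempty if and only if at least one of Λ₁, Λ₂, Λ₃ is positive. -/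
lemma exists_small_t (a δ : ℝ) (hδ : 0 < δ) : ∃ t : ℝ, 0 < t ∧ 2*t*a + t^2 ≤ δ := by
  have habs : 0 ≤ |a| := abs_nonneg a
  have h2 : a ≤ |a| := le_abs_self a
  have h3 : (0:ℝ) < 2*|a|+δ+1 := by linarith
  refine ⟨δ/(2*|a|+δ+1), div_pos hδ h3, ?_⟩
  set t := δ/(2*|a|+δ+1) with ht
  have ht3 : t * (2*|a|+δ+1) = δ := div_mul_cancel₀ δ (ne_of_gt h3)
  have htpos : 0 < t := div_pos hδ h3
  have htδ : t ≤ δ := by nlinarith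
  nlinarith

/-- When the base point `m` lies strictly inside `LC⁺`, the valley of the Higgs
potential is nonempty iff at least one spacelike eigenvalue `Λᵢ` is positive. -/
theorem stmt_13 (Λ : Fin 4 → ℝ)
    (hΛ0 : 0 < Λ 0) (hΛ : ∀ i : Fin 4, i ≠ 0 → Λ i < Λ 0)
    (Q : (Fin 4 → ℝ) → ℝ)
    (hQ : ∀ p, Q p = Λ 0 * (p 0) ^ 2 - Λ 1 * (p 1) ^ 2 - Λ 2 * (p 2) ^ 2 - Λ 3 * (p 3) ^ 2)
    (m : Fin 4 → ℝ)
    (hm0 : 0 < m 0) (hmin : (m 1) ^ 2 + (m 2) ^ 2 + (m 3) ^ 2 < (m 0) ^ 2) :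
    {r | r ∈ LCplus ∧ Q (r - m) < 0}.Nonempty ↔
      (0 < Λ 1 ∨ 0 < Λ 2 ∨ 0 < Λ 3) := by
  have hδ : 0 < (m 0)^2 - ((m 1)^2 + (m 2)^2 + (m 3)^2) := by linarith
  constructor
  · rintro ⟨r, _, hQr⟩
    by_contra h
    push_neg at h
    obtain ⟨h1, h2, h3⟩ := h
    rw [hQ] at hQr
    have e0 : (0:ℝ) ≤ Λ 0 * ((r - m) 0)^2 := by positivity
    nlinarith [sq_nonneg ((r - m) 1), sq_nonneg ((r - m) 2), sq_nonneg ((r - m) 3),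
      mul_nonneg (neg_nonneg.mpr h1) (sq_nonneg ((r - m) 1)),
      mul_nonneg (neg_nonneg.mpr h2) (sq_nonneg ((r - m) 2)),
      mul_nonneg (neg_nonneg.mpr h3) (sq_nonneg ((r - m) 3))]
  · rintro (hi | hi | hi)
    · obtain ⟨t, htpos, htle⟩ := exists_small_t (m 1) _ hδ
      refine ⟨![m 0, m 1 + t, m 2, m 3], ⟨le_of_lt hm0, ?_⟩, ?_⟩
      · simp only [Matrix.cons_val_zero, Matrix.cons_val_one, Matrix.head_cons,
          Matrix.cons_val_two, Matrix.tail_cons, Matrix.cons_val_three]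
        nlinarith
      · rw [hQ]
        simp only [Pi.sub_apply, Matrix.cons_val_zero, Matrix.cons_val_one, Matrix.head_cons,
          Matrix.cons_val_two, Matrix.tail_cons, Matrix.cons_val_three]
        have : (m 0 - m 0) = 0 := by ring
        nlinarith [mul_pos hi (pow_pos htpos 2)]
    · obtain ⟨t, htpos, htle⟩ := exists_small_t (m 2) _ hδ
      refine ⟨![m 0, m 1, m 2 + t, m 3], ⟨le_of_lt hm0, ?_⟩, ?_⟩
      · simp only [Matrix.cons_val_zero, Matrix.cons_val_one, Matrix.head_cons,
          Matrix.cons_val_two, Matrix.tail_cons, Matrix.cons_val_three]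
        nlinarith
      · rw [hQ]
        simp only [Pi.sub_apply, Matrix.cons_val_zero, Matrix.cons_val_one, Matrix.head_cons,
          Matrix.cons_val_two, Matrix.tail_cons, Matrix.cons_val_three]
        nlinarith [mul_pos hi (pow_pos htpos 2)]
    · obtain ⟨t, htpos, htle⟩ := exists_small_t (m 3) _ hδ
      refine ⟨![m 0, m 1, m 2, m 3 + t], ⟨le_of_lt hm0, ?_⟩, ?_⟩
      · simp only [Matrix.cons_val_zero, Matrix.cons_val_one, Matrix.head_cons,
          Matrix.cons_val_two, Matrix.tail_cons, Matrix.cons_val_three]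
        nlinarith
      · rw [hQ]
        simp only [Pi.sub_apply, Matrix.cons_val_zero, Matrix.cons_val_one, Matrix.head_cons,
          Matrix.cons_val_two, Matrix.tail_cons, Matrix.cons_val_three]
        nlinarith [mul_pos hi (pow_pos htpos 2)]
end

section
/- Let Λ₀, Λ₁, Λ₂, Λ₃ be real numbers with Λ₀ > Λ₁ > 0 and Λ₂ < 0, Λ₃ < 0, and define Q(p) = Λ₀ p₀² − Λ₁ p₁² − Λ₂ p₂² − Λ₃ p₃² on ℝ⁴. Let m ∈ ℝ⁴ satisfy m₀ > 0 and m₀² > m₁² + m₂² + m₃². Then the bottom of the valley, B = {r ∈ ℝ⁴ : r₀ > 0, r₀² = r₁² + r₂² + r₃², Q(r − m) < 0}, has exactly two connected components, and each component is simply connected. -/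
/-!
Since `Λ₂, Λ₃ < 0 < Λ₁ < Λ₀`, the region `{Q < 0}` is a double cone around the `p₁`-axis whose two
halves `±p₁ > 0` are convex cones of spacelike vectors. A spacelike ray `m + t • p` issued from the
future timelike point `m` leaves the future cone through its surface exactly once, at a time
`t = T(p)` depending continuously on `p`. Hence `p ↦ m + T(p) • p` retracts each half of `{Q < 0}`
onto the corresponding half `{r ∈ B | ±(r₁ - m₁) > 0}` of the valley, with section `r ↦ r - m`; a
retract of a convex set is contractible. As `Q(p) < 0` forces `p₁ ≠ 0`, the two halves are
complementary open subsets of `B`, so they are its two connected components.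
-/

open Set Topology

section Topology

variable {X Y : Type*} [TopologicalSpace X] [TopologicalSpace Y]

theorem ContractibleSpace.of_retraction [ContractibleSpace Y] (i : C(X, Y)) (r : C(Y, X))
    (hri : r.comp i = ContinuousMap.id X) : ContractibleSpace X := by
  rw [contractible_iff_id_nullhomotopic, ← hri]
  exact ((id_nullhomotopic Y).comp_left i).comp_right r

theorem IsClopen.connectedComponent_eq {U : Set X} (hU : IsClopen U) (hU' : IsPreconnected U)
    {x : X} (hx : x ∈ U) : connectedComponent x = U :=
  (hU.connectedComponent_subset hx).antisymm (hU'.subset_connectedComponent hx)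

theorem IsClopen.connectedComponent_eq_or {U : Set X} (hU : IsClopen U)
    [PreconnectedSpace U] [PreconnectedSpace ↥Uᶜ] (x : X) :
    connectedComponent x = U ∨ connectedComponent x = Uᶜ := by
  by_cases hx : x ∈ U
  · exact .inl (hU.connectedComponent_eq (isPreconnected_iff_preconnectedSpace.2 ‹_›) hx)
  · exact .inr (hU.compl.connectedComponent_eq (isPreconnected_iff_preconnectedSpace.2 ‹_›) hx)

theorem IsClopen.natCard_connectedComponents_eq_two {U : Set X} (hU : IsClopen U)
    [ConnectedSpace U] [ConnectedSpace ↥Uᶜ] : Nat.card (ConnectedComponents X) = 2 := by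
  obtain ⟨u, hu⟩ := (isConnected_iff_connectedSpace.2 ‹ConnectedSpace U›).nonempty
  obtain ⟨v, hv⟩ := (isConnected_iff_connectedSpace.2 ‹ConnectedSpace ↥Uᶜ›).nonempty
  have hcu := hU.connectedComponent_eq (isPreconnected_iff_preconnectedSpace.2 inferInstance) hu
  have hcv := hU.compl.connectedComponent_eq
    (isPreconnected_iff_preconnectedSpace.2 inferInstance) hv
  refine Nat.card_eq_two_iff.2 ⟨.mk u, .mk v, ?_, eq_univ_of_forall fun c ↦ ?_⟩
  · rw [Ne, ConnectedComponents.coe_eq_coe, hcu, hcv]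
    exact fun h ↦ (h ▸ hu) hu
  · obtain ⟨x, rfl⟩ := ConnectedComponents.surjective_coe c
    simp only [mem_insert_iff, mem_singleton_iff, ConnectedComponents.coe_eq_coe, hcu, hcv]
    exact hU.connectedComponent_eq_or x

theorem IsClopen.simplyConnectedSpace_connectedComponent {U : Set X} (hU : IsClopen U)
    [SimplyConnectedSpace U] [SimplyConnectedSpace ↥Uᶜ] (x : X) :
    SimplyConnectedSpace (connectedComponent x) := by
  rcases hU.connectedComponent_eq_or x with h | h <;> rw [h] <;> infer_instance

end Topology

section LightCone

variable {n : ℕ}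

def minkowski (x y : Fin (n + 1) → ℝ) : ℝ := x 0 * y 0 - ∑ i : Fin n, x i.succ * y i.succ

theorem minkowski_add_smul_right (x y z : Fin (n + 1) → ℝ) (t : ℝ) :
    minkowski x (y + t • z) = minkowski x y + t * minkowski x z := by
  have hsum (i : Fin n) : x i.succ * (y + t • z) i.succ =
      x i.succ * y i.succ + t * (x i.succ * z i.succ) := by
    simp only [Pi.add_apply, Pi.smul_apply, smul_eq_mul]; ring
  simp only [minkowski, hsum, Finset.sum_add_distrib, ← Finset.mul_sum]
  simp only [Pi.add_apply, Pi.smul_apply, smul_eq_mul]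
  ring

theorem minkowski_add_smul_self (m p : Fin (n + 1) → ℝ) (t : ℝ) :
    minkowski (m + t • p) (m + t • p) =
      minkowski m m + 2 * t * minkowski m p + t ^ 2 * minkowski p p := by
  have hsum : ∑ i : Fin n, (m + t • p) i.succ * (m + t • p) i.succ =
      ∑ i : Fin n, m i.succ * m i.succ + 2 * t * ∑ i : Fin n, m i.succ * p i.succ +
        t ^ 2 * ∑ i : Fin n, p i.succ * p i.succ := by
    simp only [Finset.mul_sum, ← Finset.sum_add_distrib, Pi.add_apply, Pi.smul_apply, smul_eq_mul]
    exact Finset.sum_congr rfl fun _ _ ↦ by ring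
  simp only [minkowski, hsum]
  simp only [Pi.add_apply, Pi.smul_apply, smul_eq_mul]
  ring

theorem apply_zero_pos_of_minkowski_pos {m y : Fin (n + 1) → ℝ} (hm0 : 0 < m 0)
    (hm : 0 < minkowski m m) (hy : minkowski y y = 0) (hmy : 0 < minkowski m y) : 0 < y 0 := by
  have hcs := Finset.sum_mul_sq_le_sq_mul_sq Finset.univ (fun i : Fin n ↦ m i.succ)
    (fun i ↦ y i.succ)
  simp only [minkowski, ← sq] at hm hy hmy hcs
  set d := ∑ i : Fin n, m i.succ * y i.succ
  by_contra! h
  -- `y` past-directed would give `d² > (m₀ y₀)² ≥ |m⃗|² |y⃗|²`, against Cauchy–Schwarz.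
  have hd : (m 0 * y 0) ^ 2 < d ^ 2 := by
    nlinarith [mul_nonpos_of_nonneg_of_nonpos hm0.le h]
  nlinarith [mul_le_mul_of_nonneg_right hm.le (sq_nonneg (y 0))]

/-- The positive root of the quadratic `minkowski_add_smul_self` in `t`, i.e. the time at which
the ray `m + t • p` leaves the future cone. -/
noncomputable def exitTime (m p : Fin (n + 1) → ℝ) : ℝ :=
  (minkowski m p + √(minkowski m p ^ 2 - minkowski m m * minkowski p p)) / -minkowski p p

noncomputable def exitPoint (m p : Fin (n + 1) → ℝ) : Fin (n + 1) → ℝ := m + exitTime m p • p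

variable {m p : Fin (n + 1) → ℝ}

theorem exitTime_pos (hm : 0 < minkowski m m) (hp : minkowski p p < 0) : 0 < exitTime m p := by
  have hd : minkowski m p ^ 2 < minkowski m p ^ 2 - minkowski m m * minkowski p p := by
    nlinarith
  refine div_pos ?_ (neg_pos.2 hp)
  nlinarith [Real.sqrt_nonneg (minkowski m p ^ 2 - minkowski m m * minkowski p p),
    Real.sq_sqrt (hd.le.trans' (sq_nonneg _))]

theorem minkowski_exitPoint_self (hm : 0 < minkowski m m) (hp : minkowski p p < 0) :
    minkowski (exitPoint m p) (exitPoint m p) = 0 := by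
  have hd : 0 ≤ minkowski m p ^ 2 - minkowski m m * minkowski p p := by nlinarith
  rw [exitPoint, minkowski_add_smul_self, exitTime]
  field_simp [hp.ne]
  linear_combination Real.sq_sqrt hd

theorem exitPoint_zero_pos (hm0 : 0 < m 0) (hm : 0 < minkowski m m) (hp : minkowski p p < 0) :
    0 < exitPoint m p 0 := by
  have hquad := minkowski_exitPoint_self hm hp
  rw [exitPoint, minkowski_add_smul_self] at hquad
  refine apply_zero_pos_of_minkowski_pos hm0 hm (minkowski_exitPoint_self hm hp) ?_
  rw [exitPoint, minkowski_add_smul_right]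
  nlinarith [sq_nonneg (exitTime m p)]

theorem exitTime_sub_eq_one {y : Fin (n + 1) → ℝ} (hm : 0 < minkowski m m)
    (hy : minkowski y y = 0) (hym : minkowski (y - m) (y - m) < 0) : exitTime m (y - m) = 1 := by
  have hquad := minkowski_add_smul_self m (y - m) 1
  rw [one_smul, add_sub_cancel, hy] at hquad
  have hb : 0 < minkowski m (y - m) + minkowski m m := by nlinarith
  rw [exitTime, show minkowski m (y - m) ^ 2 - minkowski m m * minkowski (y - m) (y - m) =
    (minkowski m (y - m) + minkowski m m) ^ 2 by linear_combination minkowski m m * hquad,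
    Real.sqrt_sq hb.le, div_eq_one_iff_eq (neg_ne_zero.2 hym.ne)]
  linarith

theorem exitPoint_sub {y : Fin (n + 1) → ℝ} (hm : 0 < minkowski m m)
    (hy : minkowski y y = 0) (hym : minkowski (y - m) (y - m) < 0) : exitPoint m (y - m) = y := by
  rw [exitPoint, exitTime_sub_eq_one hm hy hym, one_smul, add_sub_cancel]

theorem continuousOn_exitTime : ContinuousOn (exitTime m) {p | minkowski p p < 0} := by
  have hη : Continuous fun p : Fin (n + 1) → ℝ ↦ minkowski p p := by
    unfold minkowski; fun_prop
  have hηm : Continuous fun p : Fin (n + 1) → ℝ ↦ minkowski m p := by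
    unfold minkowski; fun_prop
  unfold exitTime
  exact (hηm.add ((hηm.pow 2).sub (continuous_const.mul hη)).sqrt).continuousOn.div
    hη.continuousOn.neg fun p hp ↦ neg_ne_zero.2 (ne_of_lt hp)

def lightConeShadow (m : Fin (n + 1) → ℝ) (C : Set (Fin (n + 1) → ℝ)) :
    Set (Fin (n + 1) → ℝ) :=
  {y | 0 < y 0 ∧ minkowski y y = 0 ∧ y - m ∈ C}

variable {C : ConvexCone ℝ (Fin (n + 1) → ℝ)}

theorem exitPoint_mem_lightConeShadow (hm0 : 0 < m 0) (hm : 0 < minkowski m m)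
    (hC : ∀ p ∈ C, minkowski p p < 0) (hp : p ∈ C) : exitPoint m p ∈ lightConeShadow m C := by
  refine ⟨exitPoint_zero_pos hm0 hm (hC p hp), minkowski_exitPoint_self hm (hC p hp), ?_⟩
  rw [exitPoint, add_sub_cancel_left]
  exact C.smul_mem (exitTime_pos hm (hC p hp)) hp

theorem contractibleSpace_lightConeShadow (hm0 : 0 < m 0) (hm : 0 < minkowski m m)
    (hC : ∀ p ∈ C, minkowski p p < 0) (hne : (C : Set (Fin (n + 1) → ℝ)).Nonempty) :
    ContractibleSpace (lightConeShadow m C) := by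
  have := C.convex.contractibleSpace hne
  refine ContractibleSpace.of_retraction (Y := C) ⟨fun y ↦ ⟨y.1 - m, y.2.2.2⟩, by fun_prop⟩
    ⟨fun p ↦ ⟨exitPoint m p, exitPoint_mem_lightConeShadow hm0 hm hC p.2⟩, ?_⟩ ?_
  · exact (continuous_const.add ((continuousOn_exitTime.comp_continuous continuous_subtype_val
      fun p ↦ hC p.1 p.2).smul continuous_subtype_val)).subtype_mk _
  · ext y : 2
    exact exitPoint_sub hm y.2.2.1 (hC _ y.2.2.2)

end LightCone

section Valley

theorem minkowski_self_fin_four (x : Fin 4 → ℝ) :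
    minkowski x x = x 0 ^ 2 - (x 1 ^ 2 + x 2 ^ 2 + x 3 ^ 2) := by
  simp [minkowski, Fin.sum_univ_three, sq]

def quarticForm (Λ p : Fin 4 → ℝ) : ℝ :=
  Λ 0 * p 0 ^ 2 - Λ 1 * p 1 ^ 2 - Λ 2 * p 2 ^ 2 - Λ 3 * p 3 ^ 2

variable {Λ p q : Fin 4 → ℝ}

theorem quarticForm_add_neg (h0 : 0 ≤ Λ 0) (h2 : Λ 2 ≤ 0) (h3 : Λ 3 ≤ 0)
    (hp : quarticForm Λ p < 0) (hq : quarticForm Λ q < 0) (hpq : 0 < p 1 * q 1) :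
    quarticForm Λ (p + q) < 0 := by
  unfold quarticForm at *
  set Np := Λ 0 * p 0 ^ 2 - Λ 2 * p 2 ^ 2 - Λ 3 * p 3 ^ 2
  set Nq := Λ 0 * q 0 ^ 2 - Λ 2 * q 2 ^ 2 - Λ 3 * q 3 ^ 2
  set N := Λ 0 * (p 0 * q 0) - Λ 2 * (p 2 * q 2) - Λ 3 * (p 3 * q 3)
  have hNp : 0 ≤ Np := by
    nlinarith [mul_nonneg h0 (sq_nonneg (p 0)), mul_nonpos_of_nonpos_of_nonneg h2 (sq_nonneg (p 2)),
      mul_nonpos_of_nonpos_of_nonneg h3 (sq_nonneg (p 3))]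
  have hNq : 0 ≤ Nq := by
    nlinarith [mul_nonneg h0 (sq_nonneg (q 0)), mul_nonpos_of_nonpos_of_nonneg h2 (sq_nonneg (q 2)),
      mul_nonpos_of_nonpos_of_nonneg h3 (sq_nonneg (q 3))]
  -- Cauchy–Schwarz for the positive semidefinite form `N`
  have hcs : N ^ 2 ≤ Np * Nq := by
    nlinarith [mul_nonneg (mul_nonneg h0 (neg_nonneg.2 h2)) (sq_nonneg (p 0 * q 2 - p 2 * q 0)),
      mul_nonneg (mul_nonneg h0 (neg_nonneg.2 h3)) (sq_nonneg (p 0 * q 3 - p 3 * q 0)),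
      mul_nonneg (mul_nonneg (neg_nonneg.2 h2) (neg_nonneg.2 h3))
        (sq_nonneg (p 2 * q 3 - p 3 * q 2))]
  have hΛ1 : 0 < Λ 1 := by nlinarith [sq_nonneg (p 1)]
  have hN : N < Λ 1 * (p 1 * q 1) := by
    refine (abs_lt_of_sq_lt_sq' ?_ (by positivity)).2
    calc N ^ 2 ≤ Np * Nq := hcs
      _ < (Λ 1 * p 1 ^ 2) * (Λ 1 * q 1 ^ 2) := mul_lt_mul'' (by linarith) (by linarith) hNp hNq
      _ = (Λ 1 * (p 1 * q 1)) ^ 2 := by ring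
  simp only [Pi.add_apply]
  nlinarith

theorem apply_one_ne_zero_of_quarticForm_neg (h0 : 0 ≤ Λ 0) (h2 : Λ 2 ≤ 0) (h3 : Λ 3 ≤ 0)
    (hp : quarticForm Λ p < 0) : p 1 ≠ 0 := by
  intro hp1
  unfold quarticForm at hp
  rw [hp1] at hp
  nlinarith [mul_nonneg h0 (sq_nonneg (p 0)), mul_nonpos_of_nonpos_of_nonneg h2 (sq_nonneg (p 2)),
    mul_nonpos_of_nonpos_of_nonneg h3 (sq_nonneg (p 3))]

theorem minkowski_self_neg_of_quarticForm_neg (h1 : 0 < Λ 1) (h10 : Λ 1 ≤ Λ 0) (h2 : Λ 2 ≤ 0)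
    (h3 : Λ 3 ≤ 0) (hp : quarticForm Λ p < 0) : minkowski p p < 0 := by
  unfold quarticForm at hp
  rw [minkowski_self_fin_four]
  nlinarith [mul_le_mul_of_nonneg_right h10 (sq_nonneg (p 0)),
    mul_nonpos_of_nonpos_of_nonneg h2 (sq_nonneg (p 2)),
    mul_nonpos_of_nonpos_of_nonneg h3 (sq_nonneg (p 3))]

def valleyCone (Λ : Fin 4 → ℝ) (ε : ℝ) (h0 : 0 ≤ Λ 0) (h2 : Λ 2 ≤ 0) (h3 : Λ 3 ≤ 0) :
    ConvexCone ℝ (Fin 4 → ℝ) where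
  carrier := {p | quarticForm Λ p < 0 ∧ 0 < ε * p 1}
  smul_mem' c hc p hp := by
    refine ⟨?_, ?_⟩
    · have : quarticForm Λ (c • p) = c ^ 2 * quarticForm Λ p := by
        simp only [quarticForm, Pi.smul_apply, smul_eq_mul]; ring
      rw [this]
      exact mul_neg_of_pos_of_neg (by positivity) hp.1
    · simpa only [Pi.smul_apply, smul_eq_mul, mul_left_comm ε] using mul_pos hc hp.2
  add_mem' p hp q hq := by
    refine ⟨quarticForm_add_neg h0 h2 h3 hp.1 hq.1 ?_, ?_⟩
    · have : 0 < ε ^ 2 * (p 1 * q 1) := by linarith [mul_pos hp.2 hq.2]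
      exact pos_of_mul_pos_right this (sq_nonneg ε)
    · simpa only [Pi.add_apply, mul_add] using add_pos hp.2 hq.2

def valleyBottom (Λ m : Fin 4 → ℝ) : Set (Fin 4 → ℝ) :=
  {r | 0 < r 0 ∧ r 0 ^ 2 = r 1 ^ 2 + r 2 ^ 2 + r 3 ^ 2 ∧ quarticForm Λ (r - m) < 0}

def valleyHalf (Λ m : Fin 4 → ℝ) (ε : ℝ) : Set (valleyBottom Λ m) :=
  Subtype.val ⁻¹' {y | 0 < ε * (y 1 - m 1)}

variable {m : Fin 4 → ℝ} {ε : ℝ}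

theorem isOpen_valleyHalf : IsOpen (valleyHalf Λ m ε) :=
  (isOpen_lt continuous_const (by fun_prop)).preimage continuous_subtype_val

theorem compl_valleyHalf_one (h0 : 0 ≤ Λ 0) (h2 : Λ 2 ≤ 0) (h3 : Λ 3 ≤ 0) :
    (valleyHalf Λ m 1)ᶜ = valleyHalf Λ m (-1) := by
  ext y
  have hy : y.1 1 ≠ m 1 := sub_ne_zero.1 <| apply_one_ne_zero_of_quarticForm_neg h0 h2 h3 y.2.2.2
  simp only [valleyHalf, mem_compl_iff, mem_preimage, mem_ofPred_eq, one_mul, neg_one_mul,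
    neg_pos, not_lt, sub_nonpos, sub_neg]
  exact ⟨fun h ↦ h.lt_of_ne hy, le_of_lt⟩

theorem image_val_valleyHalf (h0 : 0 ≤ Λ 0) (h2 : Λ 2 ≤ 0) (h3 : Λ 3 ≤ 0) :
    Subtype.val '' valleyHalf Λ m ε = lightConeShadow m (valleyCone Λ ε h0 h2 h3) := by
  rw [valleyHalf, Subtype.image_preimage_coe]
  ext y
  simp only [valleyBottom, lightConeShadow, valleyCone, minkowski_self_fin_four, sub_eq_zero,
    mem_inter_iff, mem_ofPred_eq, SetLike.mem_coe, ConvexCone.mem_mk, Pi.sub_apply, and_assoc]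

theorem contractibleSpace_valleyHalf (h1 : 0 < Λ 1) (h10 : Λ 1 ≤ Λ 0) (h2 : Λ 2 ≤ 0)
    (h3 : Λ 3 ≤ 0) (hm0 : 0 < m 0) (hm : 0 < minkowski m m) (hε : ε ≠ 0) :
    ContractibleSpace (valleyHalf Λ m ε) := by
  have : ContractibleSpace (lightConeShadow m (valleyCone Λ ε (h1.le.trans h10) h2 h3)) := by
    refine contractibleSpace_lightConeShadow hm0 hm
      (fun p hp ↦ minkowski_self_neg_of_quarticForm_neg h1 h10 h2 h3 hp.1)
      ⟨![0, ε, 0, 0], ?_, ?_⟩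
    · simpa [quarticForm] using mul_pos h1 (pow_pos (abs_pos.2 hε) 2)
    · simpa using mul_self_pos.2 hε
  rw [← image_val_valleyHalf] at this
  exact (IsEmbedding.subtypeVal.homeomorphImage _).contractibleSpace

end Valley

/-- The bottom of the valley of the 2HDM Higgs potential, in the case of exactly one
positive spacelike eigenvalue (`Λ₁ > 0`, `Λ₂, Λ₃ < 0`), has exactly two connected
components, each of which is simply connected. -/
theorem stmt_16 (Λ : Fin 4 → ℝ)
    (h1 : 0 < Λ 1) (h1' : Λ 1 < Λ 0) (h2 : Λ 2 < 0) (h3 : Λ 3 < 0)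
    (Q : (Fin 4 → ℝ) → ℝ)
    (hQ : ∀ p, Q p = Λ 0 * (p 0) ^ 2 - Λ 1 * (p 1) ^ 2 - Λ 2 * (p 2) ^ 2 - Λ 3 * (p 3) ^ 2)
    (m : Fin 4 → ℝ)
    (hm0 : 0 < m 0) (hmin : (m 1) ^ 2 + (m 2) ^ 2 + (m 3) ^ 2 < (m 0) ^ 2)
    (B : Set (Fin 4 → ℝ))
    (hB : B = {r | 0 < r 0 ∧ (r 0) ^ 2 = (r 1) ^ 2 + (r 2) ^ 2 + (r 3) ^ 2 ∧
      Q (r - m) < 0}) :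
    Nat.card (ConnectedComponents B) = 2 ∧
      ∀ x : B, SimplyConnectedSpace (connectedComponent x) := by
  obtain rfl : Q = quarticForm Λ := funext hQ
  obtain rfl : B = valleyBottom Λ m := hB
  have h0 : 0 ≤ Λ 0 := h1.le.trans h1'.le
  have hm : 0 < minkowski m m := by rw [minkowski_self_fin_four]; linarith
  have hclopen : IsClopen (valleyHalf Λ m 1) :=
    ⟨isOpen_compl_iff.1 (compl_valleyHalf_one h0 h2.le h3.le ▸ isOpen_valleyHalf),
      isOpen_valleyHalf⟩
  have := contractibleSpace_valleyHalf h1 h1'.le h2.le h3.le hm0 hm (ε := 1) one_ne_zero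
  have : ContractibleSpace ↥(valleyHalf Λ m 1)ᶜ := by
    rw [compl_valleyHalf_one h0 h2.le h3.le]
    exact contractibleSpace_valleyHalf h1 h1'.le h2.le h3.le hm0 hm (by norm_num)
  exact ⟨hclopen.natCard_connectedComponents_eq_two,
    hclopen.simplyConnectedSpace_connectedComponent⟩
end

section
/- Let Q be a real quadratic form on ℝ⁴ and L a real linear functional on ℝ⁴, and define V : ℝ⁴ → ℝ by V(r) = (1/2)·Q(r) − L(r). Assume Q(r) > 0 for every nonzero r in the forward lightcone LC⁺. If the origin 0 is a local minimum of V relative to LC⁺, then V(r) > V(0) for every r ∈ LC⁺ with r ≠ 0; in particular 0 is the unique point of LC⁺ at which V has a local minimum relative to LC⁺. -/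
lemma LCplus_smul {r : Fin 4 → ℝ} (hr : r ∈ LCplus) {t : ℝ} (ht : 0 ≤ t) :
    t • r ∈ LCplus := by
  obtain ⟨h0, h1⟩ := hr
  refine ⟨by simpa using mul_nonneg ht h0, ?_⟩
  simp only [Pi.smul_apply, smul_eq_mul]
  nlinarith [sq_nonneg t]

/-- The electroweak-symmetric minimum at the origin cannot coexist with any other
stationary point: if `0` is a local minimum relative to `LC⁺` then it is the strict
global minimum, and the unique local minimum on `LC⁺`. -/
theorem stmt_18 (Q : QuadraticForm ℝ (Fin 4 → ℝ)) (L : (Fin 4 → ℝ) →ₗ[ℝ] ℝ)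
    (V : (Fin 4 → ℝ) → ℝ)
    (hV : ∀ r, V r = (1 / 2 : ℝ) * Q r - L r)
    (hQ : ∀ r ∈ LCplus, r ≠ 0 → 0 < Q r)
    (hmin : IsLocalMinOn V LCplus 0) :
    (∀ r ∈ LCplus, r ≠ 0 → V 0 < V r) ∧
      ∀ p ∈ LCplus, IsLocalMinOn V LCplus p → p = 0 := by
  have hV0 : V 0 = 0 := by simp [hV]
  have hL : ∀ r ∈ LCplus, L r ≤ 0 := by
    intro r hr
    by_contra h
    push_neg at h
    have hrne : r ≠ 0 := by rintro rfl; simp at h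
    have hQr := hQ r hr hrne
    have hmin' := hmin
    rw [IsLocalMinOn, IsMinFilter, Metric.nhdsWithin_basis_ball.eventually_iff] at hmin'
    obtain ⟨ε, hε, H⟩ := hmin'
    set t := min (L r / Q r) (ε / (‖r‖ + 1)) with htdef
    have ht0 : 0 < t := lt_min (div_pos h hQr) (div_pos hε (by positivity))
    have hmem : t • r ∈ LCplus := LCplus_smul hr ht0.le
    have hdist : dist (t • r) (0 : Fin 4 → ℝ) < ε := by
      rw [dist_zero_right, norm_smul, Real.norm_of_nonneg ht0.le]
      calc t * ‖r‖ ≤ (ε / (‖r‖ + 1)) * ‖r‖ :=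
            mul_le_mul_of_nonneg_right (min_le_right _ _) (norm_nonneg r)
        _ < ε := by
            rw [div_mul_eq_mul_div, div_lt_iff₀ (by positivity)]
            nlinarith [norm_nonneg r]
    have hle := H ⟨Metric.mem_ball.mpr hdist, hmem⟩
    rw [hV0, hV] at hle
    have hQs : Q (t • r) = (t * t) * Q r := by
      have := QuadraticMap.map_smul Q t r
      simpa [smul_eq_mul] using this
    have hLs : L (t • r) = t * L r := by simp
    rw [hQs, hLs] at hle
    have htle : t ≤ L r / Q r := min_le_left _ _
    rw [le_div_iff₀ hQr] at htle
    nlinarith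
  have part1 : ∀ r ∈ LCplus, r ≠ 0 → V 0 < V r := by
    intro r hr hrne
    rw [hV0, hV]
    have h1 := hL r hr
    have h2 := hQ r hr hrne
    linarith
  refine ⟨part1, ?_⟩
  intro p hp hmp
  by_contra hpne
  have hQp := hQ p hp hpne
  have hLp := hL p hp
  rw [IsLocalMinOn, IsMinFilter, Metric.nhdsWithin_basis_ball.eventually_iff] at hmp
  obtain ⟨ε, hε, H⟩ := hmp
  set m := min (1/2 : ℝ) (ε / (‖p‖ + 1)) with hmdef
  have hm0 : 0 < m := lt_min (by norm_num) (div_pos hε (by positivity))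
  have hmle : m ≤ 1/2 := min_le_left _ _
  set t := 1 - m with htdef
  have ht0 : 0 < t := by simp only [htdef]; linarith
  have ht1 : t < 1 := by simp only [htdef]; linarith
  have hmem : t • p ∈ LCplus := LCplus_smul hp ht0.le
  have hdist : dist (t • p) p < ε := by
    have : t • p - p = (-m) • p := by
      simp only [htdef, sub_smul, one_smul, neg_smul]; abel
    rw [dist_eq_norm, this, norm_smul, norm_neg, Real.norm_of_nonneg hm0.le]
    calc m * ‖p‖ ≤ (ε / (‖p‖ + 1)) * ‖p‖ :=
          mul_le_mul_of_nonneg_right (min_le_right _ _) (norm_nonneg p)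
      _ < ε := by
          rw [div_mul_eq_mul_div, div_lt_iff₀ (by positivity)]
          nlinarith [norm_nonneg p]
  have hle := H ⟨Metric.mem_ball.mpr hdist, hmem⟩
  rw [hV, hV] at hle
  have hQs : Q (t • p) = (t * t) * Q p := by
    have := QuadraticMap.map_smul Q t p
    simpa [smul_eq_mul] using this
  have hLs : L (t • p) = t * L p := by simp
  rw [hQs, hLs] at hle
  clear_value t m
  nlinarith [mul_pos (mul_pos (sub_pos.mpr ht1) hQp) (by linarith : (0:ℝ) < 1 + t),
    mul_nonneg (sub_pos.mpr ht1).le (neg_nonneg.mpr hLp)]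
end
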